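/- arXiv:2111.12258 — 13 statements merged into one kernel-verified Lean document; each statement's English description precedes it below -/
import Mathlib

section
/- Under the LATE assumptions (independence of Z from all potential outcomes and potential treatments, monotonicity D(1) ≥ D(0), and relevance E[D|Z=1] > E[D|Z=0]), the Wald estimand with recoded binary treatment 1(D>0) satisfies: (E[Y|Z=1]−E[Y|Z=0])/(P(D>0|Z=1)−P(D>0|Z=0)) = E[Y(D(1))−Y(D(0)) | D(1)>D(0)=0] + E[Y(D(1))−Y(D(0)) | D(1)>D(0)>0] · P(D(1)>D(0)>0)/P(D(1)>D(0)=0), provided P(D(1)>D(0)=0) > 0. -/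
open MeasureTheory ProbabilityTheory

variable {Ω : Type*}

/-- probability of a set -/
noncomputable def pr [MeasurableSpace Ω] (μ : MeasureTheory.Measure Ω) (A : Set Ω) : ℝ :=
  (μ A).toReal

/-- conditional probability P(A | B) -/
noncomputable def cP [MeasurableSpace Ω] (μ : MeasureTheory.Measure Ω) (A B : Set Ω) : ℝ :=
  pr μ (A ∩ B) / pr μ B

/-- conditional expectation E[f | B] -/
noncomputable def cE [MeasurableSpace Ω] (μ : MeasureTheory.Measure Ω) (f : Ω → ℝ) (B : Set Ω) : ℝ :=
  (∫ ω in B, f ω ∂μ) / pr μ B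

/-- observed treatment D = Z·D(1) + (1−Z)·D(0) -/
def obsD (Z D0 D1 : Ω → ℕ) : Ω → ℕ := fun ω => if Z ω = 1 then D1 ω else D0 ω

/-- observed outcome Y = Y(D) -/
noncomputable def obsY (Z D0 D1 : Ω → ℕ) (Yp : ℕ → Ω → ℝ) : Ω → ℝ :=
  fun ω => Yp (obsD Z D0 D1 ω) ω

/-!
Independence of `Z` from `(D(0), D(1), Y(·))` makes the arm `Z = j` of the Wald ratio identify
`E[Y(D(j))]` and `P(D(j) > 0)`; boundedness of `D(j)` makes `Y(D(j))` integrable. By monotonicity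
the denominator is then `P(D(0) = 0 < D(1))`, and the integrand of the numerator
`E[Y(D(1)) - Y(D(0))]` vanishes outside the two complier groups `D(0) = 0 < D(1)` and
`0 < D(0) < D(1)`. Dividing both complier integrals by `P(D(0) = 0 < D(1))` gives the two terms.
-/

section ConditionalMeans

variable [MeasurableSpace Ω] {μ : Measure Ω} {β : Type*} [MeasurableSpace β] {Z : Ω → β}
  {s : Set β}

theorem cE_mul_pr [IsFiniteMeasure μ] (f : Ω → ℝ) (B : Set Ω) :
    cE μ f B * pr μ B = ∫ ω in B, f ω ∂μ := by
  by_cases hB : pr μ B = 0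
  · have hμB : μ B = 0 :=
      (ENNReal.toReal_eq_zero_iff _).mp hB |>.resolve_right (measure_ne_top μ B)
    rw [hB, mul_zero, Measure.restrict_eq_zero.mpr hμB, integral_zero_measure]
  · exact div_mul_cancel₀ _ hB

theorem setIntegral_preimage_eq_of_indepFun [IsFiniteMeasure μ] (hZ : Measurable Z)
    (hs : MeasurableSet s) {W : Ω → ℝ} (hW : Integrable W μ) (hWZ : IndepFun W Z μ) :
    ∫ ω in Z ⁻¹' s, W ω ∂μ = pr μ (Z ⁻¹' s) * ∫ ω, W ω ∂μ := by
  have hZs : MeasurableSet (Z ⁻¹' s) := hZ hs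
  have hind : IndepFun W (s.indicator (1 : β → ℝ) ∘ Z) μ :=
    hWZ.comp measurable_id (measurable_one.indicator hs)
  have hcomp : s.indicator 1 ∘ Z = (Z ⁻¹' s).indicator (1 : Ω → ℝ) := by
    funext ω
    exact (Set.indicator_comp_right Z).symm
  have hprod : W * (s.indicator 1 ∘ Z) = (Z ⁻¹' s).indicator W := by
    ext ω
    by_cases hω : ω ∈ Z ⁻¹' s <;> simp [hcomp, hω]
  rw [← integral_indicator hZs, ← hprod,
    hind.integral_mul_eq_mul_integral hW.aestronglyMeasurable
      (hcomp ▸ (integrable_const (1 : ℝ)).indicator hZs).aestronglyMeasurable,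
    hcomp, integral_indicator_one hZs, mul_comm]
  rfl

theorem cE_preimage_eq_integral_of_indepFun [IsFiniteMeasure μ] (hZ : Measurable Z)
    (hs : MeasurableSet s) {W : Ω → ℝ} (hW : Integrable W μ) (hWZ : IndepFun W Z μ)
    (hpos : pr μ (Z ⁻¹' s) ≠ 0) :
    cE μ W (Z ⁻¹' s) = ∫ ω, W ω ∂μ := by
  rw [cE, setIntegral_preimage_eq_of_indepFun hZ hs hW hWZ, mul_div_cancel_left₀ _ hpos]

theorem cP_preimage_eq_pr_of_indepFun {α : Type*} [MeasurableSpace α] {X : Ω → α} {t : Set α}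
    (hXZ : IndepFun X Z μ) (ht : MeasurableSet t) (hs : MeasurableSet s)
    (hpos : pr μ (Z ⁻¹' s) ≠ 0) :
    cP μ (X ⁻¹' t) (Z ⁻¹' s) = pr μ (X ⁻¹' t) := by
  rw [cP, pr, hXZ.measure_inter_preimage_eq_mul t s ht hs, ENNReal.toReal_mul]
  exact mul_div_cancel_right₀ _ hpos

end ConditionalMeans

section PotentialOutcomes

variable [MeasurableSpace Ω] {μ : Measure Ω}

theorem integrable_eval_of_le {Y : ℕ → Ω → ℝ} (hY : ∀ d, Integrable (Y d) μ) {D : Ω → ℕ}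
    (hD : Measurable D) {n : ℕ} (hDn : ∀ ω, D ω ≤ n) :
    Integrable (fun ω => Y (D ω) ω) μ := by
  have hsum : (fun ω => Y (D ω) ω) =
      fun ω => ∑ d ∈ Finset.range (n + 1), {ω | D ω = d}.indicator (Y d) ω := by
    funext ω
    rw [Finset.sum_eq_single_of_mem (D ω) (Finset.mem_range_succ_iff.mpr (hDn ω))]
    · simp
    · intro d _ hd
      exact Set.indicator_of_notMem (s := {ω | D ω = d}) (Ne.symm hd) (Y d)
  rw [hsum]
  exact integrable_finsetSum _ fun d _ => (hY d).indicator (hD (measurableSet_singleton d))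

variable {Z D0 D1 D : Ω → ℕ} {Yp : ℕ → Ω → ℝ} {i : ℕ}

theorem cE_obsY_eq_integral [IsFiniteMeasure μ] (hZ : Measurable Z)
    (hYD : Integrable (fun ω => Yp (D ω) ω) μ)
    (hindep : IndepFun (fun ω => (D ω, fun d => Yp d ω)) Z μ)
    (hpos : pr μ {ω | Z ω = i} ≠ 0) (harm : ∀ ω, Z ω = i → obsD Z D0 D1 ω = D ω) :
    cE μ (obsY Z D0 D1 Yp) {ω | Z ω = i} = ∫ ω, Yp (D ω) ω ∂μ := by
  have hZi : MeasurableSet {ω | Z ω = i} := hZ (measurableSet_singleton i)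
  have heval : Measurable fun p : ℕ × (ℕ → ℝ) => p.2 p.1 :=
    measurable_from_prod_countable_right fun n => measurable_pi_apply n
  calc cE μ (obsY Z D0 D1 Yp) {ω | Z ω = i}
      = cE μ (fun ω => Yp (D ω) ω) {ω | Z ω = i} := by
        unfold cE
        congr 1
        exact setIntegral_congr_fun hZi fun ω hω => by simp only [obsY, harm ω hω]
    _ = ∫ ω, Yp (D ω) ω ∂μ :=
        cE_preimage_eq_integral_of_indepFun hZ (measurableSet_singleton i)
          hYD (hindep.comp heval measurable_id) hpos

theorem cP_pos_obsD_eq_pr (hDZ : IndepFun D Z μ) (hpos : pr μ {ω | Z ω = i} ≠ 0)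
    (harm : ∀ ω, Z ω = i → obsD Z D0 D1 ω = D ω) :
    cP μ {ω | 0 < obsD Z D0 D1 ω} {ω | Z ω = i} = pr μ {ω | 0 < D ω} := by
  have hinter : {ω | 0 < obsD Z D0 D1 ω} ∩ {ω | Z ω = i} = {ω | 0 < D ω} ∩ {ω | Z ω = i} := by
    ext ω
    exact and_congr_left fun (hi : Z ω = i) =>
      show 0 < obsD Z D0 D1 ω ↔ 0 < D ω by rw [harm ω hi]
  rw [cP, hinter]
  exact cP_preimage_eq_pr_of_indepFun (t := {n | 0 < n}) hDZ (.of_discrete)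
    (measurableSet_singleton i) hpos

end PotentialOutcomes

section Compliers

variable [MeasurableSpace Ω] {μ : Measure Ω} {D0 D1 : Ω → ℕ}

theorem pr_pos_sub_pr_pos_eq_pr_compliers [IsFiniteMeasure μ] (hD0 : Measurable D0)
    (hD1 : Measurable D1) (hmono : ∀ᵐ ω ∂μ, D0 ω ≤ D1 ω) :
    pr μ {ω | 0 < D1 ω} - pr μ {ω | 0 < D0 ω} = pr μ {ω | D0 ω = 0 ∧ 0 < D1 ω} := by
  have hsplit : {ω | 0 < D1 ω} = {ω | D0 ω = 0 ∧ 0 < D1 ω} ∪ {ω | 0 < D0 ω ∧ 0 < D1 ω} := by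
    ext ω
    simp only [Set.mem_ofPred_eq, Set.mem_union]
    omega
  have hdisj : Disjoint {ω | D0 ω = 0 ∧ 0 < D1 ω} {ω | 0 < D0 ω ∧ 0 < D1 ω} :=
    Set.disjoint_left.mpr fun ω ⟨h, _⟩ ⟨h', _⟩ => by omega
  have hD0pos : {ω | 0 < D0 ω} =ᵐ[μ] {ω | 0 < D0 ω ∧ 0 < D1 ω} := by
    filter_upwards [hmono] with ω hle
    exact propext ⟨fun h => ⟨h, h.trans_le hle⟩, And.left⟩
  have hmeas : MeasurableSet {ω | 0 < D0 ω ∧ 0 < D1 ω} :=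
    (hD0 MeasurableSet.of_discrete).inter (hD1 MeasurableSet.of_discrete)
  rw [pr, pr, pr, hsplit, measure_union hdisj hmeas, measure_congr hD0pos,
    ENNReal.toReal_add (measure_ne_top μ _) (measure_ne_top μ _), add_sub_cancel_right]

theorem integral_eq_setIntegral_compliers_add (hD0 : Measurable D0) (hD1 : Measurable D1)
    (hmono : ∀ᵐ ω ∂μ, D0 ω ≤ D1 ω) {f : Ω → ℝ} (hf : Integrable f μ)
    (hzero : ∀ ω, D0 ω = D1 ω → f ω = 0) :
    ∫ ω, f ω ∂μ = (∫ ω in {ω | D0 ω = 0 ∧ 0 < D1 ω}, f ω ∂μ) +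
      ∫ ω in {ω | 0 < D0 ω ∧ D0 ω < D1 ω}, f ω ∂μ := by
  set A := {ω | D0 ω = 0 ∧ 0 < D1 ω}
  set B := {ω | 0 < D0 ω ∧ D0 ω < D1 ω}
  have hA : MeasurableSet A :=
    (hD0 (measurableSet_singleton 0)).inter (hD1 MeasurableSet.of_discrete)
  have hB : MeasurableSet B := (hD0 MeasurableSet.of_discrete).inter (measurableSet_lt hD0 hD1)
  have hAB : Disjoint A B :=
    Set.disjoint_left.mpr fun ω ⟨h, _⟩ ⟨h', _⟩ => by omega
  have hout : ∫ ω in (A ∪ B)ᶜ, f ω ∂μ = 0 := by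
    refine setIntegral_eq_zero_of_ae_eq_zero ?_
    filter_upwards [hmono] with ω hle hω
    simp only [A, B, Set.mem_compl_iff, Set.mem_union, Set.mem_ofPred_eq] at hω
    exact hzero ω (by omega)
  rw [← integral_add_compl (hA.union hB) hf, hout, add_zero,
    setIntegral_union hAB hB hf.integrableOn hf.integrableOn]

end Compliers

theorem recoded_wald_decomposition_general
    [MeasurableSpace Ω] (μ : MeasureTheory.Measure Ω) [IsProbabilityMeasure μ]
    (Dbar : ℕ) (Z D0 D1 : Ω → ℕ) (Yp : ℕ → Ω → ℝ)
    (hZ01 : ∀ ω, Z ω = 0 ∨ Z ω = 1)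
    (hZm : Measurable Z) (hD0m : Measurable D0) (hD1m : Measurable D1)
    (hD0b : ∀ ω, D0 ω ≤ Dbar) (hD1b : ∀ ω, D1 ω ≤ Dbar)
    (hYint : ∀ d, Integrable (Yp d) μ)
    (hindep : IndepFun (fun ω => (D0 ω, D1 ω, fun d => Yp d ω)) Z μ)
    (hmono : ∀ᵐ ω ∂μ, D0 ω ≤ D1 ω)
    (hZ1pos : 0 < pr μ {ω | Z ω = 1}) (hZ1lt : pr μ {ω | Z ω = 1} < 1) :
    (cE μ (obsY Z D0 D1 Yp) {ω | Z ω = 1} - cE μ (obsY Z D0 D1 Yp) {ω | Z ω = 0}) /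
      (cP μ {ω | 0 < obsD Z D0 D1 ω} {ω | Z ω = 1} -
        cP μ {ω | 0 < obsD Z D0 D1 ω} {ω | Z ω = 0}) =
    cE μ (fun ω => Yp (D1 ω) ω - Yp (D0 ω) ω) {ω | D0 ω = 0 ∧ 0 < D1 ω} +
      cE μ (fun ω => Yp (D1 ω) ω - Yp (D0 ω) ω) {ω | 0 < D0 ω ∧ D0 ω < D1 ω} *
        (pr μ {ω | 0 < D0 ω ∧ D0 ω < D1 ω} / pr μ {ω | D0 ω = 0 ∧ 0 < D1 ω}) := by
  have hZ0pos : pr μ {ω | Z ω = 0} ≠ 0 := by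
    have hcompl : {ω | Z ω = 0} = {ω | Z ω = 1}ᶜ := by
      ext ω; rcases hZ01 ω with h | h <;> simp [h]
    have hZ1 : MeasurableSet {ω | Z ω = 1} := hZm (measurableSet_singleton 1)
    rw [pr, hcompl, ← measureReal_def, probReal_compl_eq_one_sub hZ1]
    exact sub_ne_zero.mpr hZ1lt.ne'
  have harm1 : ∀ ω, Z ω = 1 → obsD Z D0 D1 ω = D1 ω := fun ω h => if_pos h
  have harm0 : ∀ ω, Z ω = 0 → obsD Z D0 D1 ω = D0 ω := fun ω h => if_neg (by omega)
  have hind1 : IndepFun (fun ω => (D1 ω, fun d => Yp d ω)) Z μ :=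
    hindep.comp (measurable_fst.comp measurable_snd |>.prodMk (measurable_snd.comp measurable_snd))
      measurable_id
  have hind0 : IndepFun (fun ω => (D0 ω, fun d => Yp d ω)) Z μ :=
    hindep.comp (measurable_fst.prodMk (measurable_snd.comp measurable_snd)) measurable_id
  have hD1Z : IndepFun D1 Z μ := hind1.comp measurable_fst measurable_id
  have hD0Z : IndepFun D0 Z μ := hind0.comp measurable_fst measurable_id
  have hY1 := integrable_eval_of_le hYint hD1m hD1b
  have hY0 := integrable_eval_of_le hYint hD0m hD0b
  rw [cE_obsY_eq_integral hZm hY1 hind1 hZ1pos.ne' harm1,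
    cE_obsY_eq_integral hZm hY0 hind0 hZ0pos harm0,
    cP_pos_obsD_eq_pr hD1Z hZ1pos.ne' harm1, cP_pos_obsD_eq_pr hD0Z hZ0pos harm0,
    pr_pos_sub_pr_pos_eq_pr_compliers hD0m hD1m hmono,
    ← integral_sub hY1 hY0,
    integral_eq_setIntegral_compliers_add (f := fun ω => Yp (D1 ω) ω - Yp (D0 ω) ω) hD0m hD1m hmono
      (hY1.sub hY0) fun ω h => by simp [h],
    add_div, ← mul_div_assoc, cE_mul_pr]
  rfl

/-- the recoded Wald estimand decomposes into extensive and
intensive margin components. -/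
theorem recoded_wald_decomposition
    [MeasurableSpace Ω] (μ : MeasureTheory.Measure Ω) [IsProbabilityMeasure μ]
    (Dbar : ℕ) (Z D0 D1 : Ω → ℕ) (Yp : ℕ → Ω → ℝ)
    (hZ01 : ∀ ω, Z ω = 0 ∨ Z ω = 1)
    (hZm : Measurable Z) (hD0m : Measurable D0) (hD1m : Measurable D1)
    (hD0b : ∀ ω, D0 ω ≤ Dbar) (hD1b : ∀ ω, D1 ω ≤ Dbar)
    (hYm : ∀ d, Measurable (Yp d)) (hYint : ∀ d, Integrable (Yp d) μ)
    (hindep : IndepFun (fun ω => (D0 ω, D1 ω, fun d => Yp d ω)) Z μ)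
    (hmono : ∀ᵐ ω ∂μ, D0 ω ≤ D1 ω)
    (hrel : cE μ (fun ω => (obsD Z D0 D1 ω : ℝ)) {ω | Z ω = 1} >
            cE μ (fun ω => (obsD Z D0 D1 ω : ℝ)) {ω | Z ω = 0})
    (hZ1pos : 0 < pr μ {ω | Z ω = 1}) (hZ1lt : pr μ {ω | Z ω = 1} < 1)
    (hext : 0 < pr μ {ω | D0 ω = 0 ∧ 0 < D1 ω}) :
    (cE μ (obsY Z D0 D1 Yp) {ω | Z ω = 1} - cE μ (obsY Z D0 D1 Yp) {ω | Z ω = 0}) /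
      (cP μ {ω | 0 < obsD Z D0 D1 ω} {ω | Z ω = 1} -
        cP μ {ω | 0 < obsD Z D0 D1 ω} {ω | Z ω = 0}) =
    cE μ (fun ω => Yp (D1 ω) ω - Yp (D0 ω) ω) {ω | D0 ω = 0 ∧ 0 < D1 ω} +
      cE μ (fun ω => Yp (D1 ω) ω - Yp (D0 ω) ω) {ω | 0 < D0 ω ∧ D0 ω < D1 ω} *
        (pr μ {ω | 0 < D0 ω ∧ D0 ω < D1 ω} / pr μ {ω | D0 ω = 0 ∧ 0 < D1 ω}) :=
  recoded_wald_decomposition_general μ Dbar Z D0 D1 Yp hZ01 hZm hD0m hD1m hD0b hD1b hYint hindep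
    hmono hZ1pos hZ1lt
end

section
/- Under the LATE assumptions together with EMCO (D(1)>D(0) implies D(0)=0 almost surely), the recoded Wald estimand equals a weighted average of extensive-margin treatment effects: (E[Y|Z=1]−E[Y|Z=0])/(P(D>0|Z=1)−P(D>0|Z=0)) = Σ_{d=1}^{D̄} ω_d · E[Y(d)−Y(0) | D(1)=d, D(0)=0], where ω_d = P(D(1)=d, D(0)=0)/P(D(1)>0, D(0)=0). -/
open MeasureTheory ProbabilityTheory

variable {Ω : Type*}

/-!
Independence of `Z` turns the conditional means and probabilities given `Z = z` into the
unconditional ones of the potential quantities: `E[Y | Z = 1] = E[Y(D(1))]`,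
`E[Y | Z = 0] = E[Y(D(0))]` and `P(D > 0 | Z = z) = P(D(z) > 0)`. By monotonicity, `{D(1) > 0}`
is the disjoint union of `{D(0) > 0}` and the extensive-margin compliers `{D(1) > 0, D(0) = 0}`,
so the denominator is the complier share. By EMCO, `Y(D(1)) - Y(D(0))` vanishes outside the
compliers and equals `Y(d) - Y(0)` on `{D(1) = d, D(0) = 0}`, so the numerator is
`∑ d, E[(Y(d) - Y(0)); D(1) = d, D(0) = 0]`.
-/

lemma measurable_snd_apply_fst {ι E : Type*} [Countable ι] [MeasurableSpace ι]
    [MeasurableSingletonClass ι] [MeasurableSpace E] :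
    Measurable fun p : ι × (ι → E) => p.2 p.1 :=
  measurable_from_prod_countable_right fun i => measurable_pi_apply i

section General

variable [MeasurableSpace Ω] {μ : Measure Ω}

lemma integrable_apply_of_le {E : Type*} [NormedAddCommGroup E] {Y : ℕ → Ω → E} {D : Ω → ℕ}
    {N : ℕ} (hY : ∀ d, Integrable (Y d) μ) (hD : Measurable D) (hDN : ∀ ω, D ω ≤ N) :
    Integrable (fun ω => Y (D ω) ω) μ := by
  have hsum : (fun ω => Y (D ω) ω) =
      fun ω => ∑ d ∈ Finset.range (N + 1), {ω | D ω = d}.indicator (Y d) ω := by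
    funext ω
    simp [Set.indicator_apply, Nat.lt_succ_iff.mpr (hDN ω)]
  rw [hsum]
  exact integrable_finsetSum _ fun d _ => (hY d).indicator (hD (measurableSet_singleton d))

lemma setIntegral_div_eq_pr_div_mul_cE [IsFiniteMeasure μ] (f : Ω → ℝ) (A : Set Ω) (c : ℝ) :
    (∫ ω in A, f ω ∂μ) / c = pr μ A / c * cE μ f A := by
  by_cases hA : pr μ A = 0
  · have hμA : μ A = 0 := (measureReal_eq_zero_iff).mp hA
    simp [hA, setIntegral_measure_zero f hμA]
  · unfold cE
    field_simp

lemma cE_congr {f g : Ω → ℝ} {B : Set Ω} (hB : MeasurableSet B) (hfg : Set.EqOn f g B) :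
    cE μ f B = cE μ g B := by
  rw [cE, cE, setIntegral_congr_fun hB hfg]

variable {β : Type*} [MeasurableSpace β] [MeasurableSingletonClass β]

lemma cE_eq_integral_of_indepFun {V : Ω → ℝ} {Z : Ω → β} (h : IndepFun V Z μ)
    (hV : AEMeasurable V μ) (hZ : Measurable Z) {z : β} (hz : pr μ {ω | Z ω = z} ≠ 0) :
    cE μ V {ω | Z ω = z} = ∫ ω, V ω ∂μ := by
  have hset : MeasurableSet[MeasurableSpace.comap Z ‹_›] {ω | Z ω = z} :=
    ⟨{z}, measurableSet_singleton z, rfl⟩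
  have hmul : ∫ ω in {ω | Z ω = z}, V ω ∂μ = μ.real {ω | Z ω = z} * ∫ ω, V ω ∂μ :=
    ((IndepFun_iff_Indep V Z μ).mp h).symm.setIntegral_eq_mul hZ.comap_le hV hset
      (f := id) aestronglyMeasurable_id
  rw [cE, hmul]
  exact mul_div_cancel_left₀ _ hz

lemma cP_eq_pr_of_indepFun {α : Type*} [MeasurableSpace α] {X : Ω → α} {Z : Ω → β}
    (h : IndepFun X Z μ) {S : Set α} (hS : MeasurableSet S) {z : β}
    (hz : pr μ {ω | Z ω = z} ≠ 0) :
    cP μ (X ⁻¹' S) {ω | Z ω = z} = pr μ (X ⁻¹' S) := by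
  rw [cP, pr, pr, show {ω | Z ω = z} = Z ⁻¹' {z} from rfl,
    h.measure_inter_preimage_eq_mul _ _ hS (measurableSet_singleton z), ENNReal.toReal_mul]
  exact mul_div_cancel_right₀ _ hz

end General

lemma sub_eq_sum_indicator_compliers {E : Type*} [AddCommGroup E] {D0 D1 : Ω → ℕ}
    (Y : ℕ → Ω → E) {N : ℕ} {ω : Ω} (hmono : D0 ω ≤ D1 ω) (hemco : D0 ω < D1 ω → D0 ω = 0)
    (hN : D1 ω ≤ N) :
    Y (D1 ω) ω - Y (D0 ω) ω =
      ∑ d ∈ Finset.Icc 1 N, {ω | D1 ω = d ∧ D0 ω = 0}.indicator (fun ω => Y d ω - Y 0 ω) ω := by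
  rcases hmono.eq_or_lt with heq | hlt
  · rw [heq, sub_self]
    refine (Finset.sum_eq_zero fun d hd => Set.indicator_of_notMem ?_ _).symm
    rintro ⟨rfl, h0⟩
    have := (Finset.mem_Icc.mp hd).1
    omega
  · have h0 := hemco hlt
    simp only [Set.indicator_apply, Set.mem_ofPred_eq, h0, and_true]
    rw [Finset.sum_ite_eq, if_pos (Finset.mem_Icc.mpr ⟨by omega, hN⟩)]

section Compliers

variable [MeasurableSpace Ω] {μ : Measure Ω} {D0 D1 : Ω → ℕ}

lemma pr_pos_sub_pr_pos_eq [IsFiniteMeasure μ] (hD0 : Measurable D0)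
    (hmono : ∀ᵐ ω ∂μ, D0 ω ≤ D1 ω) :
    pr μ {ω | 0 < D1 ω} - pr μ {ω | 0 < D0 ω} = pr μ {ω | 0 < D1 ω ∧ D0 ω = 0} := by
  have hsplit : {ω | 0 < D1 ω} =ᵐ[μ]
      ({ω | 0 < D0 ω} ∪ {ω | 0 < D1 ω ∧ D0 ω = 0} : Set Ω) := by
    filter_upwards [hmono] with ω hω
    change (0 < D1 ω) = (0 < D0 ω ∨ 0 < D1 ω ∧ D0 ω = 0)
    apply propext
    omega
  have hdisj : Disjoint {ω | 0 < D0 ω} {ω | 0 < D1 ω ∧ D0 ω = 0} :=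
    Set.disjoint_left.mpr fun ω (h : 0 < D0 ω) ⟨_, h0⟩ => by omega
  unfold pr
  rw [measure_congr hsplit, measure_union' hdisj (hD0 measurableSet_Ioi),
    ENNReal.toReal_add (measure_ne_top μ _) (measure_ne_top μ _)]
  ring

lemma integral_sub_eq_sum_setIntegral_compliers {E : Type*} [NormedAddCommGroup E]
    [NormedSpace ℝ E] {Y : ℕ → Ω → E} {N : ℕ} (hY : ∀ d, Integrable (Y d) μ)
    (hD0 : Measurable D0) (hD1 : Measurable D1) (hD0N : ∀ ω, D0 ω ≤ N) (hD1N : ∀ ω, D1 ω ≤ N)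
    (hmono : ∀ᵐ ω ∂μ, D0 ω ≤ D1 ω) (hemco : ∀ᵐ ω ∂μ, D0 ω < D1 ω → D0 ω = 0) :
    ∫ ω, Y (D1 ω) ω ∂μ - ∫ ω, Y (D0 ω) ω ∂μ =
      ∑ d ∈ Finset.Icc 1 N, ∫ ω in {ω | D1 ω = d ∧ D0 ω = 0}, Y d ω - Y 0 ω ∂μ := by
  have hA : ∀ d, MeasurableSet {ω | D1 ω = d ∧ D0 ω = 0} := fun d =>
    (hD1 (measurableSet_singleton d)).inter (hD0 (measurableSet_singleton 0))
  simp_rw [← integral_indicator (hA _)]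
  rw [← integral_sub (integrable_apply_of_le hY hD1 hD1N) (integrable_apply_of_le hY hD0 hD0N),
    ← integral_finsetSum]
  · refine integral_congr_ae ?_
    filter_upwards [hmono, hemco] with ω hω hω'
    exact sub_eq_sum_indicator_compliers Y hω hω' (hD1N ω)
  · exact fun d _ => ((hY d).sub (hY 0)).indicator (hA d)

end Compliers

section Recoding

variable [MeasurableSpace Ω] {μ : Measure Ω} {Z D0 D1 : Ω → ℕ}

lemma pr_eq_zero_eq_one_sub [IsProbabilityMeasure μ] (hZ01 : ∀ ω, Z ω = 0 ∨ Z ω = 1)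
    (hZ : Measurable Z) : pr μ {ω | Z ω = 0} = 1 - pr μ {ω | Z ω = 1} := by
  have hcompl : {ω | Z ω = 0} = {ω | Z ω = 1}ᶜ := by
    ext ω
    rcases hZ01 ω with h | h <;> simp [h]
  rw [hcompl]
  exact probReal_compl_eq_one_sub (hZ (measurableSet_singleton 1))

lemma cE_obsY_eq_integral_of_eq_one {Yp : ℕ → Ω → ℝ} (hZ : Measurable Z)
    (hindep : IndepFun (fun ω => Yp (D1 ω) ω) Z μ)
    (hY : AEMeasurable (fun ω => Yp (D1 ω) ω) μ) (hz : pr μ {ω | Z ω = 1} ≠ 0) :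
    cE μ (obsY Z D0 D1 Yp) {ω | Z ω = 1} = ∫ ω, Yp (D1 ω) ω ∂μ := by
  rw [cE_congr (B := {ω | Z ω = 1}) (g := fun ω => Yp (D1 ω) ω)
    (hZ (measurableSet_singleton 1)) fun ω (hω : Z ω = 1) => by simp [obsY, obsD, hω]]
  exact cE_eq_integral_of_indepFun hindep hY hZ hz

lemma cE_obsY_eq_integral_of_eq_zero {Yp : ℕ → Ω → ℝ} (hZ : Measurable Z)
    (hindep : IndepFun (fun ω => Yp (D0 ω) ω) Z μ)
    (hY : AEMeasurable (fun ω => Yp (D0 ω) ω) μ) (hz : pr μ {ω | Z ω = 0} ≠ 0) :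
    cE μ (obsY Z D0 D1 Yp) {ω | Z ω = 0} = ∫ ω, Yp (D0 ω) ω ∂μ := by
  rw [cE_congr (B := {ω | Z ω = 0}) (g := fun ω => Yp (D0 ω) ω)
    (hZ (measurableSet_singleton 0)) fun ω (hω : Z ω = 0) => by simp [obsY, obsD, hω]]
  exact cE_eq_integral_of_indepFun hindep hY hZ hz

lemma cP_obsD_eq_pr_of_eq_one (hindep : IndepFun D1 Z μ) (hz : pr μ {ω | Z ω = 1} ≠ 0) :
    cP μ {ω | 0 < obsD Z D0 D1 ω} {ω | Z ω = 1} = pr μ {ω | 0 < D1 ω} := by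
  have hrecode :
      {ω | 0 < obsD Z D0 D1 ω} ∩ {ω | Z ω = 1} = {ω | 0 < D1 ω} ∩ {ω | Z ω = 1} := by
    ext ω
    simp +contextual [obsD]
  rw [cP, hrecode, ← cP]
  exact cP_eq_pr_of_indepFun hindep measurableSet_Ioi hz

lemma cP_obsD_eq_pr_of_eq_zero (hindep : IndepFun D0 Z μ) (hz : pr μ {ω | Z ω = 0} ≠ 0) :
    cP μ {ω | 0 < obsD Z D0 D1 ω} {ω | Z ω = 0} = pr μ {ω | 0 < D0 ω} := by
  have hrecode :
      {ω | 0 < obsD Z D0 D1 ω} ∩ {ω | Z ω = 0} = {ω | 0 < D0 ω} ∩ {ω | Z ω = 0} := by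
    ext ω
    simp +contextual [obsD]
  rw [cP, hrecode, ← cP]
  exact cP_eq_pr_of_indepFun hindep measurableSet_Ioi hz

end Recoding

theorem recoded_wald_emco_general
    [MeasurableSpace Ω] (μ : MeasureTheory.Measure Ω) [IsProbabilityMeasure μ]
    (Dbar : ℕ) (Z D0 D1 : Ω → ℕ) (Yp : ℕ → Ω → ℝ)
    (hZ01 : ∀ ω, Z ω = 0 ∨ Z ω = 1)
    (hZm : Measurable Z) (hD0m : Measurable D0) (hD1m : Measurable D1)
    (hD0b : ∀ ω, D0 ω ≤ Dbar) (hD1b : ∀ ω, D1 ω ≤ Dbar)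
    (hYint : ∀ d, Integrable (Yp d) μ)
    (hindep : IndepFun (fun ω => (D0 ω, D1 ω, fun d => Yp d ω)) Z μ)
    (hmono : ∀ᵐ ω ∂μ, D0 ω ≤ D1 ω)
    (hemco : ∀ᵐ ω ∂μ, D0 ω < D1 ω → D0 ω = 0)
    (hZ1pos : 0 < pr μ {ω | Z ω = 1}) (hZ1lt : pr μ {ω | Z ω = 1} < 1) :
    (cE μ (obsY Z D0 D1 Yp) {ω | Z ω = 1} - cE μ (obsY Z D0 D1 Yp) {ω | Z ω = 0}) /
      (cP μ {ω | 0 < obsD Z D0 D1 ω} {ω | Z ω = 1} -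
        cP μ {ω | 0 < obsD Z D0 D1 ω} {ω | Z ω = 0}) =
    ∑ d ∈ Finset.Icc 1 Dbar,
      (pr μ {ω | D1 ω = d ∧ D0 ω = 0} / pr μ {ω | 0 < D1 ω ∧ D0 ω = 0}) *
        cE μ (fun ω => Yp d ω - Yp 0 ω) {ω | D1 ω = d ∧ D0 ω = 0} := by
  have hZ1 : pr μ {ω | Z ω = 1} ≠ 0 := hZ1pos.ne'
  have hZ0 : pr μ {ω | Z ω = 0} ≠ 0 := by
    rw [pr_eq_zero_eq_one_sub hZ01 hZm]
    linarith
  have hY1Z : IndepFun (fun ω => Yp (D1 ω) ω) Z μ :=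
    hindep.comp (measurable_snd_apply_fst.comp measurable_snd) measurable_id
  have hY0Z : IndepFun (fun ω => Yp (D0 ω) ω) Z μ :=
    hindep.comp (measurable_snd_apply_fst.comp (measurable_fst.prodMk measurable_snd.snd))
      measurable_id
  have hD1Z : IndepFun D1 Z μ := hindep.comp measurable_snd.fst measurable_id
  have hD0Z : IndepFun D0 Z μ := hindep.comp measurable_fst measurable_id
  rw [cE_obsY_eq_integral_of_eq_one hZm hY1Z
      (integrable_apply_of_le hYint hD1m hD1b).aemeasurable hZ1,
    cE_obsY_eq_integral_of_eq_zero hZm hY0Z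
      (integrable_apply_of_le hYint hD0m hD0b).aemeasurable hZ0,
    cP_obsD_eq_pr_of_eq_one hD1Z hZ1, cP_obsD_eq_pr_of_eq_zero hD0Z hZ0,
    pr_pos_sub_pr_pos_eq hD0m hmono,
    integral_sub_eq_sum_setIntegral_compliers hYint hD0m hD1m hD0b hD1b hmono hemco,
    Finset.sum_div]
  exact Finset.sum_congr rfl fun d _ => setIntegral_div_eq_pr_div_mul_cE _ _ _

/-- under EMCO the recoded Wald estimand is a weighted average of
extensive-margin treatment effects. -/
theorem recoded_wald_emco
    [MeasurableSpace Ω] (μ : MeasureTheory.Measure Ω) [IsProbabilityMeasure μ]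
    (Dbar : ℕ) (Z D0 D1 : Ω → ℕ) (Yp : ℕ → Ω → ℝ)
    (hZ01 : ∀ ω, Z ω = 0 ∨ Z ω = 1)
    (hZm : Measurable Z) (hD0m : Measurable D0) (hD1m : Measurable D1)
    (hD0b : ∀ ω, D0 ω ≤ Dbar) (hD1b : ∀ ω, D1 ω ≤ Dbar)
    (hYm : ∀ d, Measurable (Yp d)) (hYint : ∀ d, Integrable (Yp d) μ)
    (hindep : IndepFun (fun ω => (D0 ω, D1 ω, fun d => Yp d ω)) Z μ)
    (hmono : ∀ᵐ ω ∂μ, D0 ω ≤ D1 ω)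
    (hemco : ∀ᵐ ω ∂μ, D0 ω < D1 ω → D0 ω = 0)
    (hZ1pos : 0 < pr μ {ω | Z ω = 1}) (hZ1lt : pr μ {ω | Z ω = 1} < 1)
    (hcomp : 0 < pr μ {ω | D0 ω < D1 ω}) :
    (cE μ (obsY Z D0 D1 Yp) {ω | Z ω = 1} - cE μ (obsY Z D0 D1 Yp) {ω | Z ω = 0}) /
      (cP μ {ω | 0 < obsD Z D0 D1 ω} {ω | Z ω = 1} -
        cP μ {ω | 0 < obsD Z D0 D1 ω} {ω | Z ω = 0}) =
    ∑ d ∈ Finset.Icc 1 Dbar,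
      (pr μ {ω | D1 ω = d ∧ D0 ω = 0} / pr μ {ω | 0 < D1 ω ∧ D0 ω = 0}) *
        cE μ (fun ω => Yp d ω - Yp 0 ω) {ω | D1 ω = d ∧ D0 ω = 0} :=
  recoded_wald_emco_general μ Dbar Z D0 D1 Yp hZ01 hZm hD0m hD1m hD0b hD1b hYint hindep hmono hemco
    hZ1pos hZ1lt
end

section
/- Under the LATE assumptions and EMCO, for every positive treatment level d > 0 the instrument weakly increases its mass: P(D=d|Z=1) ≥ P(D=d|Z=0). -/
open MeasureTheory ProbabilityTheory

variable {Ω : Type*}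

/-- under LATE + EMCO, for every d > 0, P(D=d|Z=1) ≥ P(D=d|Z=0). -/
theorem emco_positive_mass_increases
    [MeasurableSpace Ω] (μ : MeasureTheory.Measure Ω) [IsProbabilityMeasure μ]
    (Dbar : ℕ) (Z D0 D1 : Ω → ℕ)
    (hZ01 : ∀ ω, Z ω = 0 ∨ Z ω = 1)
    (hZm : Measurable Z) (hD0m : Measurable D0) (hD1m : Measurable D1)
    (hD0b : ∀ ω, D0 ω ≤ Dbar) (hD1b : ∀ ω, D1 ω ≤ Dbar)
    (hindep : IndepFun (fun ω => (D0 ω, D1 ω)) Z μ)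
    (hmono : ∀ᵐ ω ∂μ, D0 ω ≤ D1 ω)
    (hemco : ∀ᵐ ω ∂μ, D0 ω < D1 ω → D0 ω = 0)
    (hZ1pos : 0 < pr μ {ω | Z ω = 1}) (hZ1lt : pr μ {ω | Z ω = 1} < 1) :
    ∀ d : ℕ, 0 < d →
      cP μ {ω | obsD Z D0 D1 ω = d} {ω | Z ω = 1} ≥
        cP μ {ω | obsD Z D0 D1 ω = d} {ω | Z ω = 0} := by
  intro d hd
  have hD1Z : IndepFun D1 Z μ := hindep.comp measurable_snd measurable_id
  have hD0Z : IndepFun D0 Z μ := hindep.comp measurable_fst measurable_id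
  have hset1 : {ω | obsD Z D0 D1 ω = d} ∩ {ω | Z ω = 1}
      = (D1 ⁻¹' {d}) ∩ (Z ⁻¹' {1}) := by
    ext ω
    simp only [Set.mem_inter_iff, Set.mem_setOf_eq, Set.mem_preimage, Set.mem_singleton_iff, obsD]
    constructor
    · rintro ⟨h1, h2⟩; rw [if_pos h2] at h1; exact ⟨h1, h2⟩
    · rintro ⟨h1, h2⟩; exact ⟨by rw [if_pos h2]; exact h1, h2⟩
  have hset0 : {ω | obsD Z D0 D1 ω = d} ∩ {ω | Z ω = 0}
      = (D0 ⁻¹' {d}) ∩ (Z ⁻¹' {0}) := by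
    ext ω
    simp only [Set.mem_inter_iff, Set.mem_setOf_eq, Set.mem_preimage, Set.mem_singleton_iff, obsD]
    constructor
    · rintro ⟨h1, h2⟩; rw [if_neg (by omega)] at h1; exact ⟨h1, h2⟩
    · rintro ⟨h1, h2⟩; exact ⟨by rw [if_neg (by omega)]; exact h1, h2⟩
  have hmul1 : μ ((D1 ⁻¹' {d}) ∩ (Z ⁻¹' {1})) = μ (D1 ⁻¹' {d}) * μ (Z ⁻¹' {1}) :=
    hD1Z.measure_inter_preimage_eq_mul {d} {1} (measurableSet_singleton _) (measurableSet_singleton _)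
  have hmul0 : μ ((D0 ⁻¹' {d}) ∩ (Z ⁻¹' {0})) = μ (D0 ⁻¹' {d}) * μ (Z ⁻¹' {0}) :=
    hD0Z.measure_inter_preimage_eq_mul {d} {0} (measurableSet_singleton _) (measurableSet_singleton _)
  have hZ0pos : 0 < pr μ {ω | Z ω = 0} := by
    by_contra h
    push_neg at h
    have hz0 : μ {ω | Z ω = 0} = 0 := by
      have := (ENNReal.toReal_eq_zero_iff _).mp (le_antisymm h (ENNReal.toReal_nonneg))
      rcases this with h | h
      · exact h
      · exact absurd h (measure_ne_top μ _)
    have : μ {ω | Z ω = 1} = 1 := by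
      have hunion : {ω | Z ω = 0} ∪ {ω | Z ω = 1} = Set.univ := by
        ext ω; simpa using hZ01 ω
      have := measure_union_le (μ := μ) {ω | Z ω = 0} {ω | Z ω = 1}
      rw [hunion, measure_univ, hz0, zero_add] at this
      exact le_antisymm prob_le_one this
    simp only [pr, this, ENNReal.toReal_one] at hZ1lt
    exact lt_irrefl 1 hZ1lt
  -- a.e. subset
  have hsub : μ (D0 ⁻¹' {d}) ≤ μ (D1 ⁻¹' {d}) := by
    apply measure_mono_ae
    filter_upwards [hmono, hemco] with ω h1 h2
    intro hω
    have hω' : D0 ω = d := hω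
    rcases lt_or_eq_of_le h1 with h | h
    · exact absurd (h2 h) (by omega)
    · show D1 ω = d
      omega
  have hZeq1 : (Z ⁻¹' {1} : Set Ω) = {ω | Z ω = 1} := rfl
  have hZeq0 : (Z ⁻¹' {0} : Set Ω) = {ω | Z ω = 0} := rfl
  rw [ge_iff_le]
  simp only [cP, pr]
  rw [hset1, hset0, hmul1, hmul0, ← hZeq1, ← hZeq0, ENNReal.toReal_mul, ENNReal.toReal_mul]
  have h0 : ((μ (Z ⁻¹' ({0} : Set ℕ))).toReal : ℝ) ≠ 0 := ne_of_gt hZ0pos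
  have h1 : ((μ (Z ⁻¹' ({1} : Set ℕ))).toReal : ℝ) ≠ 0 := ne_of_gt hZ1pos
  rw [mul_div_assoc, mul_div_assoc, div_self h0, div_self h1, mul_one, mul_one]
  exact ENNReal.toReal_mono (measure_ne_top μ _) hsub
end

section
/- Under the LATE assumptions and EMCO, for any measurable set A in the support of Y and any d > 0: P(Y ∈ A, D=d | Z=1) ≥ P(Y ∈ A, D=d | Z=0). -/
open MeasureTheory ProbabilityTheory

variable {Ω : Type*}

/-! Conditioning on `Z = 1` makes the observed treatment `D(1)`, conditioning on `Z = 0` makes it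
`D(0)`, and by independence of `Z` from `(D(0), D(1), Y(·))` both conditional probabilities become
unconditional probabilities of potential-outcome events. EMCO and monotonicity force `D(1) = d`
almost surely on `{D(0) = d}` when `d > 0`, so the event with `D(0)` is a.s. contained in the event
with `D(1)`. -/

section Independence

variable [MeasurableSpace Ω] {μ : Measure Ω} {α β : Type*} [MeasurableSpace α]
  [MeasurableSpace β] {W : Ω → α} {Z : Ω → β} {S : Set α} {T : Set β}

lemma pr_inter_preimage_eq_mul (h : IndepFun W Z μ) (hS : MeasurableSet S)
    (hT : MeasurableSet T) : pr μ (W ⁻¹' S ∩ Z ⁻¹' T) = pr μ (W ⁻¹' S) * pr μ (Z ⁻¹' T) := by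
  rw [pr, h.measure_inter_preimage_eq_mul S T hS hT, ENNReal.toReal_mul, pr, pr]

lemma cP_preimage_of_indepFun (h : IndepFun W Z μ) (hS : MeasurableSet S)
    (hT : MeasurableSet T) (hZT : pr μ (Z ⁻¹' T) ≠ 0) :
    cP μ (W ⁻¹' S) (Z ⁻¹' T) = pr μ (W ⁻¹' S) := by
  rw [cP, pr_inter_preimage_eq_mul h hS hT, mul_div_cancel_right₀ _ hZT]

lemma cP_preimage_le_of_indepFun (h : IndepFun W Z μ) (hS : MeasurableSet S)
    (hT : MeasurableSet T) : cP μ (W ⁻¹' S) (Z ⁻¹' T) ≤ pr μ (W ⁻¹' S) := by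
  by_cases hZT : pr μ (Z ⁻¹' T) = 0
  · rw [cP, hZT, div_zero]
    exact ENNReal.toReal_nonneg
  · exact (cP_preimage_of_indepFun h hS hT hZT).le

end Independence

section ObservedEvents

variable {Z D0 D1 : Ω → ℕ} {Yp : ℕ → Ω → ℝ} {A : Set ℝ} {d : ℕ}

lemma obs_event_inter_eq_one :
    {ω | obsY Z D0 D1 Yp ω ∈ A ∧ obsD Z D0 D1 ω = d} ∩ {ω | Z ω = 1} =
      {ω | Yp d ω ∈ A ∧ D1 ω = d} ∩ {ω | Z ω = 1} := by
  ext ω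
  by_cases hZ : Z ω = 1
  · simp +contextual [obsY, obsD, hZ, and_comm]
  · simp [hZ]

lemma obs_event_inter_eq_zero :
    {ω | obsY Z D0 D1 Yp ω ∈ A ∧ obsD Z D0 D1 ω = d} ∩ {ω | Z ω = 0} =
      {ω | Yp d ω ∈ A ∧ D0 ω = d} ∩ {ω | Z ω = 0} := by
  ext ω
  by_cases hZ : Z ω = 0
  · simp +contextual [obsY, obsD, hZ, and_comm]
  · simp [hZ]

variable [MeasurableSpace Ω] {μ : Measure Ω}

lemma cP_obs_event_one (hindep : IndepFun (fun ω => (D0 ω, D1 ω, fun d => Yp d ω)) Z μ)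
    (hA : MeasurableSet A) (hZ1 : pr μ {ω | Z ω = 1} ≠ 0) :
    cP μ {ω | obsY Z D0 D1 Yp ω ∈ A ∧ obsD Z D0 D1 ω = d} {ω | Z ω = 1} =
      pr μ {ω | Yp d ω ∈ A ∧ D1 ω = d} := by
  rw [cP, obs_event_inter_eq_one]
  exact cP_preimage_of_indepFun hindep
    (((measurable_pi_apply d).comp measurable_snd.snd hA).inter
      (measurable_snd.fst (measurableSet_singleton d))) (measurableSet_singleton 1) hZ1

lemma cP_obs_event_zero_le (hindep : IndepFun (fun ω => (D0 ω, D1 ω, fun d => Yp d ω)) Z μ)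
    (hA : MeasurableSet A) :
    cP μ {ω | obsY Z D0 D1 Yp ω ∈ A ∧ obsD Z D0 D1 ω = d} {ω | Z ω = 0} ≤
      pr μ {ω | Yp d ω ∈ A ∧ D0 ω = d} := by
  rw [cP, obs_event_inter_eq_zero]
  exact cP_preimage_le_of_indepFun hindep
    (((measurable_pi_apply d).comp measurable_snd.snd hA).inter
      (measurable_fst (measurableSet_singleton d))) (measurableSet_singleton 0)

end ObservedEvents

section EMCO

variable [MeasurableSpace Ω] {μ : Measure Ω} {D0 D1 : Ω → ℕ} {d : ℕ}

lemma ae_D1_eq_of_D0_eq (hmono : ∀ᵐ ω ∂μ, D0 ω ≤ D1 ω)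
    (hemco : ∀ᵐ ω ∂μ, D0 ω < D1 ω → D0 ω = 0) (hd : 0 < d) :
    ∀ᵐ ω ∂μ, D0 ω = d → D1 ω = d := by
  filter_upwards [hmono, hemco] with ω hle hcomp hD0
  rcases hle.lt_or_eq with hlt | heq
  · exact absurd (hcomp hlt) (by omega)
  · omega

lemma pr_potential_event_le_of_emco [IsFiniteMeasure μ] {Y : Ω → ℝ} {A : Set ℝ}
    (hmono : ∀ᵐ ω ∂μ, D0 ω ≤ D1 ω) (hemco : ∀ᵐ ω ∂μ, D0 ω < D1 ω → D0 ω = 0) (hd : 0 < d) :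
    pr μ {ω | Y ω ∈ A ∧ D0 ω = d} ≤ pr μ {ω | Y ω ∈ A ∧ D1 ω = d} := by
  refine ENNReal.toReal_mono (measure_ne_top μ _) (measure_mono_ae ?_)
  filter_upwards [ae_D1_eq_of_D0_eq hmono hemco hd] with ω h
  exact fun ⟨hY, hD0⟩ => ⟨hY, h hD0⟩

end EMCO

theorem emco_joint_density_increases_general
    [MeasurableSpace Ω] (μ : MeasureTheory.Measure Ω) [IsProbabilityMeasure μ]
    (Z D0 D1 : Ω → ℕ) (Yp : ℕ → Ω → ℝ)
    (hindep : IndepFun (fun ω => (D0 ω, D1 ω, fun d => Yp d ω)) Z μ)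
    (hmono : ∀ᵐ ω ∂μ, D0 ω ≤ D1 ω)
    (hemco : ∀ᵐ ω ∂μ, D0 ω < D1 ω → D0 ω = 0)
    (hZ1pos : 0 < pr μ {ω | Z ω = 1})
    (A : Set ℝ) (hA : MeasurableSet A) (d : ℕ) (hd : 0 < d) :
    cP μ {ω | obsY Z D0 D1 Yp ω ∈ A ∧ obsD Z D0 D1 ω = d} {ω | Z ω = 1} ≥
      cP μ {ω | obsY Z D0 D1 Yp ω ∈ A ∧ obsD Z D0 D1 ω = d} {ω | Z ω = 0} :=
  calc cP μ {ω | obsY Z D0 D1 Yp ω ∈ A ∧ obsD Z D0 D1 ω = d} {ω | Z ω = 0}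
      ≤ pr μ {ω | Yp d ω ∈ A ∧ D0 ω = d} := cP_obs_event_zero_le hindep hA
    _ ≤ pr μ {ω | Yp d ω ∈ A ∧ D1 ω = d} := pr_potential_event_le_of_emco hmono hemco hd
    _ = cP μ {ω | obsY Z D0 D1 Yp ω ∈ A ∧ obsD Z D0 D1 ω = d} {ω | Z ω = 1} :=
      (cP_obs_event_one hindep hA hZ1pos.ne').symm

/-- under LATE + EMCO, P(Y ∈ A, D=d | Z=1) ≥ P(Y ∈ A, D=d | Z=0) for d > 0. -/
theorem emco_joint_density_increases
    [MeasurableSpace Ω] (μ : MeasureTheory.Measure Ω) [IsProbabilityMeasure μ]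
    (Dbar : ℕ) (Z D0 D1 : Ω → ℕ) (Yp : ℕ → Ω → ℝ)
    (hZ01 : ∀ ω, Z ω = 0 ∨ Z ω = 1)
    (hZm : Measurable Z) (hD0m : Measurable D0) (hD1m : Measurable D1)
    (hD0b : ∀ ω, D0 ω ≤ Dbar) (hD1b : ∀ ω, D1 ω ≤ Dbar)
    (hYm : ∀ d, Measurable (Yp d))
    (hindep : IndepFun (fun ω => (D0 ω, D1 ω, fun d => Yp d ω)) Z μ)
    (hmono : ∀ᵐ ω ∂μ, D0 ω ≤ D1 ω)
    (hemco : ∀ᵐ ω ∂μ, D0 ω < D1 ω → D0 ω = 0)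
    (hZ1pos : 0 < pr μ {ω | Z ω = 1}) (hZ1lt : pr μ {ω | Z ω = 1} < 1)
    (A : Set ℝ) (hA : MeasurableSet A) (d : ℕ) (hd : 0 < d) :
    cP μ {ω | obsY Z D0 D1 Yp ω ∈ A ∧ obsD Z D0 D1 ω = d} {ω | Z ω = 1} ≥
      cP μ {ω | obsY Z D0 D1 Yp ω ∈ A ∧ obsD Z D0 D1 ω = d} {ω | Z ω = 0} :=
  emco_joint_density_increases_general μ Z D0 D1 Yp hindep hmono hemco hZ1pos A hA d hd
end

section
/- Under the LATE assumptions and EMCO, for any measurable set A: P(Y ∈ A, D=0 | Z=0) ≥ P(Y ∈ A, D=0 | Z=1). -/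
open MeasureTheory ProbabilityTheory

variable {Ω : Type*}

/-- under LATE + EMCO, P(Y ∈ A, D=0 | Z=0) ≥ P(Y ∈ A, D=0 | Z=1). -/
theorem emco_joint_density_at_zero_decreases
    [MeasurableSpace Ω] (μ : MeasureTheory.Measure Ω) [IsProbabilityMeasure μ]
    (Dbar : ℕ) (Z D0 D1 : Ω → ℕ) (Yp : ℕ → Ω → ℝ)
    (hZ01 : ∀ ω, Z ω = 0 ∨ Z ω = 1)
    (hZm : Measurable Z) (hD0m : Measurable D0) (hD1m : Measurable D1)
    (hD0b : ∀ ω, D0 ω ≤ Dbar) (hD1b : ∀ ω, D1 ω ≤ Dbar)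
    (hYm : ∀ d, Measurable (Yp d))
    (hindep : IndepFun (fun ω => (D0 ω, D1 ω, fun d => Yp d ω)) Z μ)
    (hmono : ∀ᵐ ω ∂μ, D0 ω ≤ D1 ω)
    (hemco : ∀ᵐ ω ∂μ, D0 ω < D1 ω → D0 ω = 0)
    (hZ1pos : 0 < pr μ {ω | Z ω = 1}) (hZ1lt : pr μ {ω | Z ω = 1} < 1)
    (A : Set ℝ) (hA : MeasurableSet A) :
    cP μ {ω | obsY Z D0 D1 Yp ω ∈ A ∧ obsD Z D0 D1 ω = 0} {ω | Z ω = 0} ≥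
      cP μ {ω | obsY Z D0 D1 Yp ω ∈ A ∧ obsD Z D0 D1 ω = 0} {ω | Z ω = 1} := by
  classical
  set W : Ω → ℕ × ℕ × (ℕ → ℝ) := fun ω => (D0 ω, D1 ω, fun d => Yp d ω) with hW
  have hWm : Measurable W := by
    refine (hD0m.prodMk (hD1m.prodMk ?_))
    exact measurable_pi_lambda _ (fun d => hYm d)
  set S0 : Set (ℕ × ℕ × (ℕ → ℝ)) := {p | p.2.2 0 ∈ A ∧ p.1 = 0} with hS0
  set S1 : Set (ℕ × ℕ × (ℕ → ℝ)) := {p | p.2.2 0 ∈ A ∧ p.2.1 = 0} with hS1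
  have hS0m : MeasurableSet S0 := by
    apply MeasurableSet.inter
    · exact ((measurable_pi_apply 0).comp (measurable_snd.comp measurable_snd)) hA
    · exact (measurable_fst (MeasurableSet.singleton 0))
  have hS1m : MeasurableSet S1 := by
    apply MeasurableSet.inter
    · exact ((measurable_pi_apply 0).comp (measurable_snd.comp measurable_snd)) hA
    · exact ((measurable_fst.comp measurable_snd) (MeasurableSet.singleton 0))
  set E : Set Ω := {ω | obsY Z D0 D1 Yp ω ∈ A ∧ obsD Z D0 D1 ω = 0} with hE
  -- event identities
  have hE0 : E ∩ {ω | Z ω = 0} = (W ⁻¹' S0) ∩ (Z ⁻¹' {0}) := by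
    ext ω
    simp only [hE, Set.mem_inter_iff, Set.mem_setOf_eq, Set.mem_preimage,
      Set.mem_singleton_iff, hS0, hW, obsY, obsD]
    constructor
    · rintro ⟨⟨hy, hd⟩, hz⟩
      have hz1 : Z ω ≠ 1 := by rw [hz]; norm_num
      simp only [if_neg hz1] at hy hd
      rw [hd] at hy
      exact ⟨⟨hy, hd⟩, hz⟩
    · rintro ⟨⟨hy, hd⟩, hz⟩
      rw [hz]
      simp only [if_neg (by norm_num : (0:ℕ) ≠ 1)]
      exact ⟨⟨by rw [hd]; exact hy, hd⟩, trivial⟩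
  have hE1 : E ∩ {ω | Z ω = 1} = (W ⁻¹' S1) ∩ (Z ⁻¹' {1}) := by
    ext ω
    simp only [hE, Set.mem_inter_iff, Set.mem_setOf_eq, Set.mem_preimage,
      Set.mem_singleton_iff, hS1, hW, obsY, obsD]
    constructor
    · rintro ⟨⟨hy, hd⟩, hz⟩
      simp only [if_pos hz] at hy hd
      rw [hd] at hy
      exact ⟨⟨hy, hd⟩, hz⟩
    · rintro ⟨⟨hy, hd⟩, hz⟩
      simp only [if_pos hz]
      exact ⟨⟨by rw [hd]; exact hy, hd⟩, hz⟩
  -- independence factorization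
  have hfac : ∀ (S : Set (ℕ × ℕ × (ℕ → ℝ))) (hS : MeasurableSet S) (z : ℕ),
      μ (W ⁻¹' S ∩ Z ⁻¹' {z}) = μ (W ⁻¹' S) * μ (Z ⁻¹' {z}) := by
    intro S hS z
    exact hindep.measure_inter_preimage_eq_mul S {z} hS (MeasurableSet.singleton z)
  have hZ0set : ({ω | Z ω = 0} : Set Ω) = Z ⁻¹' {0} := rfl
  have hZ1set : ({ω | Z ω = 1} : Set Ω) = Z ⁻¹' {1} := rfl
  -- positivity of P(Z=0)
  have hZ0compl : ({ω | Z ω = 0} : Set Ω) = {ω | Z ω = 1}ᶜ := by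
    ext ω; simp only [Set.mem_setOf_eq, Set.mem_compl_iff]
    rcases hZ01 ω with h | h <;> simp [h]
  have hZ1m : MeasurableSet {ω | Z ω = 1} := hZm (MeasurableSet.singleton 1)
  have hZ0pr : pr μ {ω | Z ω = 0} = 1 - pr μ {ω | Z ω = 1} := by
    rw [hZ0compl]
    unfold pr
    rw [measure_compl hZ1m (measure_ne_top μ _)]
    rw [measure_univ]
    rw [ENNReal.toReal_sub_of_le (prob_le_one) (by norm_num)]
    norm_num
  have hZ0pos : 0 < pr μ {ω | Z ω = 0} := by rw [hZ0pr]; linarith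
  -- compute cP values
  have hcompute : ∀ (S : Set (ℕ × ℕ × (ℕ → ℝ))) (hS : MeasurableSet S) (z : ℕ)
      (hpos : 0 < pr μ {ω | Z ω = z}) (heq : E ∩ {ω | Z ω = z} = W ⁻¹' S ∩ Z ⁻¹' {z}),
      cP μ E {ω | Z ω = z} = pr μ (W ⁻¹' S) := by
    intro S hS z hpos heq
    unfold cP
    rw [heq]
    unfold pr
    rw [hfac S hS z, ENNReal.toReal_mul]
    have hb : (μ (Z ⁻¹' {z})).toReal ≠ 0 := ne_of_gt hpos
    rw [mul_div_assoc, show ({ω | Z ω = z} : Set Ω) = Z ⁻¹' {z} from rfl,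
      div_self hb, mul_one]
  have h0 : cP μ E {ω | Z ω = 0} = pr μ (W ⁻¹' S0) := hcompute S0 hS0m 0 hZ0pos hE0
  have h1 : cP μ E {ω | Z ω = 1} = pr μ (W ⁻¹' S1) := hcompute S1 hS1m 1 hZ1pos hE1
  rw [h0, h1]
  -- a.e. inclusion: D1 = 0 implies D0 = 0
  have hmeas : μ (W ⁻¹' S1) ≤ μ (W ⁻¹' S0) := by
    apply measure_mono_ae
    filter_upwards [hmono] with ω hle
    intro hmem
    obtain ⟨ha, hd⟩ := (hmem : Yp 0 ω ∈ A ∧ D1 ω = 0)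
    exact (⟨ha, Nat.le_zero.mp (hd ▸ hle)⟩ : Yp 0 ω ∈ A ∧ D0 ω = 0)
  unfold pr
  exact ENNReal.toReal_le_toReal (measure_ne_top μ _) (measure_ne_top μ _) |>.mpr hmeas
end

section
/- Under the LATE assumptions and EMCO, the moment inequalities P(D=d|Z=1) − P(D=d|Z=0) ≥ 0 for all d > 0 are equivalent to the level-set inequalities: P(D≥d|Z=1) − P(D≥d|Z=0) ≥ P(D≥d+1|Z=1) − P(D≥d+1|Z=0) for all d > 0. -/
open MeasureTheory ProbabilityTheory

variable {Ω : Type*}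

/-- equivalence of the pointwise moment inequalities and the
level-set inequalities. -/
theorem emco_moment_inequalities_equiv
    [MeasurableSpace Ω] (μ : MeasureTheory.Measure Ω) [IsProbabilityMeasure μ]
    (Dbar : ℕ) (Z D0 D1 : Ω → ℕ)
    (hZ01 : ∀ ω, Z ω = 0 ∨ Z ω = 1)
    (hZm : Measurable Z) (hD0m : Measurable D0) (hD1m : Measurable D1)
    (hD0b : ∀ ω, D0 ω ≤ Dbar) (hD1b : ∀ ω, D1 ω ≤ Dbar)
    (hindep : IndepFun (fun ω => (D0 ω, D1 ω)) Z μ)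
    (hmono : ∀ᵐ ω ∂μ, D0 ω ≤ D1 ω)
    (hemco : ∀ᵐ ω ∂μ, D0 ω < D1 ω → D0 ω = 0)
    (hZ1pos : 0 < pr μ {ω | Z ω = 1}) (hZ1lt : pr μ {ω | Z ω = 1} < 1) :
    (∀ d : ℕ, 0 < d →
        cP μ {ω | obsD Z D0 D1 ω = d} {ω | Z ω = 1} -
          cP μ {ω | obsD Z D0 D1 ω = d} {ω | Z ω = 0} ≥ 0) ↔
    (∀ d : ℕ, 0 < d →
        cP μ {ω | d ≤ obsD Z D0 D1 ω} {ω | Z ω = 1} -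
          cP μ {ω | d ≤ obsD Z D0 D1 ω} {ω | Z ω = 0} ≥
        cP μ {ω | d + 1 ≤ obsD Z D0 D1 ω} {ω | Z ω = 1} -
          cP μ {ω | d + 1 ≤ obsD Z D0 D1 ω} {ω | Z ω = 0}) := by
  set D := obsD Z D0 D1 with hD
  have hDm : Measurable D := by
    have hmz : MeasurableSet {ω | Z ω = 1} := hZm (measurableSet_singleton 1)
    exact Measurable.ite hmz hD1m hD0m
  have key : ∀ (d : ℕ) (B : Set Ω), MeasurableSet B →
      cP μ {ω | d ≤ D ω} B = cP μ {ω | D ω = d} B + cP μ {ω | d + 1 ≤ D ω} B := by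
    intro d B hB
    have hset : {ω | d ≤ D ω} ∩ B = ({ω | D ω = d} ∩ B) ∪ ({ω | d + 1 ≤ D ω} ∩ B) := by
      ext ω; simp only [Set.mem_inter_iff, Set.mem_union, Set.mem_setOf_eq]
      constructor
      · rintro ⟨h1, h2⟩; rcases eq_or_lt_of_le h1 with h | h
        · exact Or.inl ⟨h.symm, h2⟩
        · exact Or.inr ⟨h, h2⟩
      · rintro (⟨h1, h2⟩ | ⟨h1, h2⟩)
        · exact ⟨h1.ge, h2⟩
        · exact ⟨le_of_lt (Nat.lt_of_succ_le h1), h2⟩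
    have hdisj : Disjoint ({ω | D ω = d} ∩ B) ({ω | d + 1 ≤ D ω} ∩ B) := by
      rw [Set.disjoint_left]
      rintro ω ⟨h1, _⟩ ⟨h2, _⟩
      simp only [Set.mem_setOf_eq] at h1 h2; omega
    have hm2 : MeasurableSet ({ω | d + 1 ≤ D ω} ∩ B) :=
      (hDm measurableSet_Ici).inter hB
    have hpr : pr μ ({ω | d ≤ D ω} ∩ B)
        = pr μ ({ω | D ω = d} ∩ B) + pr μ ({ω | d + 1 ≤ D ω} ∩ B) := by
      rw [pr, hset, measure_union hdisj hm2,
        ENNReal.toReal_add (measure_ne_top μ _) (measure_ne_top μ _)]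
      rfl
    simp only [cP, hpr, add_div]
  have hB1 : MeasurableSet {ω | Z ω = 1} := hZm (measurableSet_singleton 1)
  have hB0 : MeasurableSet {ω | Z ω = 0} := hZm (measurableSet_singleton 0)
  constructor
  · intro h d hd
    rw [key d _ hB1, key d _ hB0]
    have := h d hd
    linarith
  · intro h d hd
    have := h d hd
    rw [key d _ hB1, key d _ hB0] at this
    linarith
end

section
/- Under the LATE assumptions with ordered treatment, for every d ≥ 1: P(D ≥ d | Z=1) − P(D ≥ d | Z=0) = P(D(1) ≥ d > D(0)) ≥ 0. -/
open MeasureTheory ProbabilityTheory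

variable {Ω : Type*}

/-- under LATE, P(D ≥ d|Z=1) − P(D ≥ d|Z=0) = P(D(1) ≥ d > D(0)) ≥ 0. -/
theorem late_levelset_identification
    [MeasurableSpace Ω] (μ : MeasureTheory.Measure Ω) [IsProbabilityMeasure μ]
    (Dbar : ℕ) (Z D0 D1 : Ω → ℕ)
    (hZ01 : ∀ ω, Z ω = 0 ∨ Z ω = 1)
    (hZm : Measurable Z) (hD0m : Measurable D0) (hD1m : Measurable D1)
    (hD0b : ∀ ω, D0 ω ≤ Dbar) (hD1b : ∀ ω, D1 ω ≤ Dbar)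
    (hindep : IndepFun (fun ω => (D0 ω, D1 ω)) Z μ)
    (hmono : ∀ᵐ ω ∂μ, D0 ω ≤ D1 ω)
    (hZ1pos : 0 < pr μ {ω | Z ω = 1}) (hZ1lt : pr μ {ω | Z ω = 1} < 1) :
    ∀ d : ℕ, 1 ≤ d →
      (cP μ {ω | d ≤ obsD Z D0 D1 ω} {ω | Z ω = 1} -
          cP μ {ω | d ≤ obsD Z D0 D1 ω} {ω | Z ω = 0} =
        pr μ {ω | d ≤ D1 ω ∧ D0 ω < d}) ∧
      0 ≤ cP μ {ω | d ≤ obsD Z D0 D1 ω} {ω | Z ω = 1} -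
            cP μ {ω | d ≤ obsD Z D0 D1 ω} {ω | Z ω = 0} := by
  intro d hd
  have hZ0c : {ω | Z ω = 0} = {ω | Z ω = 1}ᶜ := by
    ext ω; rcases hZ01 ω with h | h <;> simp [h]
  -- rewrite observed sets
  have hobs1 : {ω | d ≤ obsD Z D0 D1 ω} ∩ {ω | Z ω = 1}
      = {ω | d ≤ D1 ω} ∩ {ω | Z ω = 1} := by
    ext ω; simp only [Set.mem_inter_iff, Set.mem_setOf_eq, obsD]
    constructor
    · rintro ⟨h1, h2⟩; rw [if_pos h2] at h1; exact ⟨h1, h2⟩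
    · rintro ⟨h1, h2⟩; rw [if_pos h2]; exact ⟨h1, h2⟩
  have hobs0 : {ω | d ≤ obsD Z D0 D1 ω} ∩ {ω | Z ω = 0}
      = {ω | d ≤ D0 ω} ∩ {ω | Z ω = 0} := by
    ext ω; simp only [Set.mem_inter_iff, Set.mem_setOf_eq, obsD]
    constructor
    · rintro ⟨h1, h2⟩; rw [if_neg (by omega)] at h1; exact ⟨h1, h2⟩
    · rintro ⟨h1, h2⟩; rw [if_neg (by omega)]; exact ⟨h1, h2⟩
  -- independence
  have key : ∀ (s : Set (ℕ × ℕ)) (t : Set ℕ), MeasurableSet s → MeasurableSet t →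
      μ ((fun ω => (D0 ω, D1 ω)) ⁻¹' s ∩ Z ⁻¹' t)
        = μ ((fun ω => (D0 ω, D1 ω)) ⁻¹' s) * μ (Z ⁻¹' t) :=
    fun s t hs ht => hindep.measure_inter_preimage_eq_mul s t hs ht
  have key1 : μ ({ω | d ≤ D1 ω} ∩ {ω | Z ω = 1}) = μ {ω | d ≤ D1 ω} * μ {ω | Z ω = 1} := by
    have := key {p : ℕ × ℕ | d ≤ p.2} {1}
      (measurable_snd (by trivial)) (measurableSet_singleton 1)
    simpa [Set.preimage, Set.mem_setOf_eq] using this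
  have key0 : μ ({ω | d ≤ D0 ω} ∩ {ω | Z ω = 0}) = μ {ω | d ≤ D0 ω} * μ {ω | Z ω = 0} := by
    have := key {p : ℕ × ℕ | d ≤ p.1} {0}
      (measurable_fst (by trivial)) (measurableSet_singleton 0)
    simpa [Set.preimage, Set.mem_setOf_eq] using this
  have hZ1ne : pr μ {ω | Z ω = 1} ≠ 0 := ne_of_gt hZ1pos
  have hZ1ms : MeasurableSet {ω | Z ω = 1} := hZm (measurableSet_singleton 1)
  have hZ0pr : pr μ {ω | Z ω = 0} = 1 - pr μ {ω | Z ω = 1} := by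
    rw [hZ0c]
    simp only [pr]
    rw [prob_compl_eq_one_sub hZ1ms]
    rw [ENNReal.toReal_sub_of_le prob_le_one (by simp)]
    simp
  have hZ0ne : pr μ {ω | Z ω = 0} ≠ 0 := by rw [hZ0pr]; linarith
  have c1 : cP μ {ω | d ≤ obsD Z D0 D1 ω} {ω | Z ω = 1} = pr μ {ω | d ≤ D1 ω} := by
    unfold cP
    have h : pr μ ({ω | d ≤ obsD Z D0 D1 ω} ∩ {ω | Z ω = 1})
        = pr μ {ω | d ≤ D1 ω} * pr μ {ω | Z ω = 1} := by
      unfold pr; rw [hobs1, key1, ENNReal.toReal_mul]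
    rw [h, mul_div_assoc, div_self hZ1ne, mul_one]
  have c0 : cP μ {ω | d ≤ obsD Z D0 D1 ω} {ω | Z ω = 0} = pr μ {ω | d ≤ D0 ω} := by
    unfold cP
    have h : pr μ ({ω | d ≤ obsD Z D0 D1 ω} ∩ {ω | Z ω = 0})
        = pr μ {ω | d ≤ D0 ω} * pr μ {ω | Z ω = 0} := by
      unfold pr; rw [hobs0, key0, ENNReal.toReal_mul]
    rw [h, mul_div_assoc, div_self hZ0ne, mul_one]
  -- splitting
  have hsplit : μ {ω | d ≤ D1 ω} = μ {ω | d ≤ D1 ω ∧ D0 ω < d} + μ {ω | d ≤ D0 ω} := by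
    have hae : μ ({ω | d ≤ D1 ω} ∩ {ω | d ≤ D0 ω}) = μ {ω | d ≤ D0 ω} := by
      apply measure_congr
      rw [Filter.eventuallyEq_set]
      filter_upwards [hmono] with ω h
      simp only [Set.mem_inter_iff, Set.mem_setOf_eq]
      omega
    have hu : {ω | d ≤ D1 ω} = {ω | d ≤ D1 ω ∧ D0 ω < d} ∪ ({ω | d ≤ D1 ω} ∩ {ω | d ≤ D0 ω}) := by
      ext ω; simp only [Set.mem_union, Set.mem_inter_iff, Set.mem_setOf_eq]
      constructor
      · intro h1; by_cases h2 : d ≤ D0 ω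
        · exact Or.inr ⟨h1, h2⟩
        · exact Or.inl ⟨h1, by omega⟩
      · rintro (⟨h1, _⟩ | ⟨h1, _⟩) <;> exact h1
    have hdisj : Disjoint {ω | d ≤ D1 ω ∧ D0 ω < d} ({ω | d ≤ D1 ω} ∩ {ω | d ≤ D0 ω}) := by
      rw [Set.disjoint_left]
      rintro ω ⟨_, h2⟩ hmem
      have h4 : d ≤ D0 ω := hmem.2
      omega
    have hms : MeasurableSet ({ω | d ≤ D1 ω} ∩ {ω | d ≤ D0 ω}) :=
      (hD1m (by trivial : MeasurableSet {n | d ≤ n})).inter (hD0m (by trivial))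
    rw [hu, measure_union hdisj hms, hae]
  have hfin : ∀ s : Set Ω, μ s ≠ ⊤ := fun s => measure_ne_top μ s
  have hsplitR : pr μ {ω | d ≤ D1 ω} = pr μ {ω | d ≤ D1 ω ∧ D0 ω < d} + pr μ {ω | d ≤ D0 ω} := by
    simp only [pr, hsplit, ENNReal.toReal_add (hfin _) (hfin _)]
  refine ⟨?_, ?_⟩
  · rw [c1, c0, hsplitR]; ring
  · rw [c1, c0, hsplitR]
    have : 0 ≤ pr μ {ω | d ≤ D1 ω ∧ D0 ω < d} := ENNReal.toReal_nonneg
    linarith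
end

section
/- Under the LATE assumptions and EMCO, with κ := 1 − (1−1(D>0))·Z/P(Z=1) − 1(D>0)·(1−Z)/P(Z=0), for any bounded measurable function g of (Y, 1(D>0)): E[κ·g(Y, 1(D>0))] / P(D(1)>D(0)) = E[g(Y, 1(D>0)) | D(1)>D(0)=0]. -/
open MeasureTheory ProbabilityTheory

variable {Ω : Type*}

/-!
Under monotonicity and EMCO almost every unit is a never-taker (`D(1) = 0`), an always-taker
(`0 < D(0) = D(1)`) or a complier (`D(0) = 0 < D(1)`). On compliers `κ = 1` whatever `Z` is. On
never-takers `κ = 1 - Z / P(Z = 1)` and on always-takers `κ = 1 - (1 - Z) / P(Z = 0)`, and there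
`g(Y, 1(D > 0))` is a function of the latent vector `(D(0), D(1), Y(·))` alone; since that vector
is independent of `Z` and both weights have mean zero, these contributions integrate to zero.
What remains is `E[g · 1(complier)]`, and by EMCO `P(D(1) > D(0)) = P(D(0) = 0 < D(1))`.
-/

lemma integrable_of_abs_le [MeasurableSpace Ω] {μ : Measure Ω} [IsFiniteMeasure μ] {f : Ω → ℝ}
    (hf : Measurable f) {C : ℝ} (hC : ∀ ω, |f ω| ≤ C) : Integrable f μ :=
  .of_bound hf.aestronglyMeasurable C (ae_of_all _ hC)

lemma measurable_eval_of_countable {ι β : Type*} [MeasurableSpace ι] [Countable ι]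
    [MeasurableSingletonClass ι] [MeasurableSpace β] :
    Measurable fun p : (ι → β) × ι => p.1 p.2 :=
  measurable_from_prod_countable_left fun i => measurable_pi_apply i

namespace ProbabilityTheory.IndepFun

section

variable [MeasurableSpace Ω] {μ : Measure Ω} {ξ V : Ω → ℝ}

lemma integrable_one_sub_div_mul (hind : ξ ⟂ᵢ[μ] V) (hξ : Integrable ξ μ)
    (hV : Integrable V μ) (c : ℝ) : Integrable (fun ω => (1 - ξ ω / c) * V ω) μ :=
  (hV.sub ((hind.integrable_mul hξ hV).div_const c)).congr
    (ae_of_all _ fun ω => by simp only [Pi.sub_apply, Pi.mul_apply]; ring)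

lemma integral_one_sub_div_integral_mul_eq_zero (hind : ξ ⟂ᵢ[μ] V)
    (hξ : Integrable ξ μ) (hV : Integrable V μ) (hξ0 : ∫ ω, ξ ω ∂μ ≠ 0) :
    ∫ ω, (1 - ξ ω / ∫ ω, ξ ω ∂μ) * V ω ∂μ = 0 := by
  have hξV := hind.integrable_mul hξ hV
  calc ∫ ω, (1 - ξ ω / ∫ ω, ξ ω ∂μ) * V ω ∂μ
      = ∫ ω, V ω ∂μ - (∫ ω, ξ ω * V ω ∂μ) / ∫ ω, ξ ω ∂μ := by
        rw [← integral_div, ← integral_sub hV (by exact hξV.div_const _)]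
        congr with ω; ring
    _ = 0 := by
        rw [hind.integral_fun_mul_eq_mul_integral hξ.aestronglyMeasurable hV.aestronglyMeasurable]
        field_simp; ring

end

section

variable [MeasurableSpace Ω] {μ : Measure Ω} [IsFiniteMeasure μ] {β : Type*} [MeasurableSpace β]
  {W : Ω → β} {ξ : Ω → ℝ} {h : β → ℝ} (hind : W ⟂ᵢ[μ] ξ) (hξ : Integrable ξ μ)
  (hWm : Measurable W) (hhm : Measurable h) {C : ℝ} (hC : ∀ w, |h w| ≤ C)
include hind hξ hWm hhm hC

lemma integrable_one_sub_div_mul_comp (c : ℝ) :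
    Integrable (fun ω => (1 - ξ ω / c) * h (W ω)) μ :=
  (hind.comp hhm measurable_id).symm.integrable_one_sub_div_mul hξ
    (integrable_of_abs_le (hhm.comp hWm) fun ω => hC (W ω)) c

lemma integral_one_sub_div_mul_comp_eq_zero {c : ℝ} (hc : ∫ ω, ξ ω ∂μ = c) (hc0 : c ≠ 0) :
    ∫ ω, (1 - ξ ω / c) * h (W ω) ∂μ = 0 :=
  hc ▸ (hind.comp hhm measurable_id).symm.integral_one_sub_div_integral_mul_eq_zero hξ
    (integrable_of_abs_le (hhm.comp hWm) fun ω => hC (W ω)) (hc ▸ hc0)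

end

end ProbabilityTheory.IndepFun

section BinaryInstrument

variable [MeasurableSpace Ω] {μ : Measure Ω} {Z : Ω → ℕ}
  (hZm : Measurable Z) (hZ01 : ∀ ω, Z ω = 0 ∨ Z ω = 1)
include hZm hZ01

lemma integrable_natCast_of_zero_or_one [IsFiniteMeasure μ] :
    Integrable (fun ω => (Z ω : ℝ)) μ :=
  integrable_of_abs_le (measurable_from_top.comp hZm) (C := 1) fun ω => by
    rcases hZ01 ω with h | h <;> simp [h]

lemma integral_natCast_eq_pr_eq_one : ∫ ω, (Z ω : ℝ) ∂μ = pr μ {ω | Z ω = 1} := by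
  have hZ : (fun ω => (Z ω : ℝ)) = {ω | Z ω = 1}.indicator 1 := by
    ext ω; rcases hZ01 ω with h | h <;> simp [h]
  rw [hZ, integral_indicator_one (s := {ω | Z ω = 1}) (hZm (measurableSet_singleton 1))]
  rfl

lemma integral_one_sub_natCast_eq_pr_eq_zero :
    ∫ ω, (1 - (Z ω : ℝ)) ∂μ = pr μ {ω | Z ω = 0} := by
  have hZ : (fun ω => 1 - (Z ω : ℝ)) = {ω | Z ω = 0}.indicator 1 := by
    ext ω; rcases hZ01 ω with h | h <;> simp [h]
  rw [hZ, integral_indicator_one (s := {ω | Z ω = 0}) (hZm (measurableSet_singleton 0))]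
  rfl

lemma pr_eq_zero_eq_one_sub_pr_eq_one [IsProbabilityMeasure μ] :
    pr μ {ω | Z ω = 0} = 1 - pr μ {ω | Z ω = 1} := by
  rw [← integral_one_sub_natCast_eq_pr_eq_zero hZm hZ01, ← integral_natCast_eq_pr_eq_one hZm hZ01,
    integral_sub (integrable_const 1) (integrable_natCast_of_zero_or_one hZm hZ01),
    integral_const, probReal_univ, one_smul]

end BinaryInstrument

-- `w = (D(0), D(1), Y(·))`; under monotonicity and EMCO, `D(1) = 0` marks never-takers and
-- `0 < D(0)` always-takers.
def neverTakerMoment (g : ℝ × ℝ → ℝ) (w : ℕ × ℕ × (ℕ → ℝ)) : ℝ :=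
  if w.2.1 = 0 then g (w.2.2 0, 0) else 0

def alwaysTakerMoment (g : ℝ × ℝ → ℝ) (w : ℕ × ℕ × (ℕ → ℝ)) : ℝ :=
  if 0 < w.1 then g (w.2.2 w.1, 1) else 0

section TypeMoments

variable {g : ℝ × ℝ → ℝ}

lemma measurable_neverTakerMoment (hgm : Measurable g) : Measurable (neverTakerMoment g) :=
  Measurable.ite (measurable_snd.fst (measurableSet_singleton 0))
    (hgm.comp (((measurable_pi_apply 0).comp measurable_snd.snd).prodMk measurable_const))
    measurable_const

lemma measurable_alwaysTakerMoment (hgm : Measurable g) : Measurable (alwaysTakerMoment g) :=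
  Measurable.ite (measurable_fst (.of_discrete (s := {n : ℕ | 0 < n})))
    (hgm.comp ((measurable_eval_of_countable.comp (measurable_snd.snd.prodMk measurable_fst)).prodMk
      measurable_const))
    measurable_const

lemma abs_neverTakerMoment_le {C : ℝ} (hC : ∀ x, |g x| ≤ C) (w : ℕ × ℕ × (ℕ → ℝ)) :
    |neverTakerMoment g w| ≤ C := by
  unfold neverTakerMoment; split_ifs
  · exact hC _
  · simpa using (abs_nonneg _).trans (hC 0)

lemma abs_alwaysTakerMoment_le {C : ℝ} (hC : ∀ x, |g x| ≤ C) (w : ℕ × ℕ × (ℕ → ℝ)) :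
    |alwaysTakerMoment g w| ≤ C := by
  unfold alwaysTakerMoment; split_ifs
  · exact hC _
  · simpa using (abs_nonneg _).trans (hC 0)

end TypeMoments

def obsI (Z D0 D1 : Ω → ℕ) (ω : Ω) : ℝ := if 0 < obsD Z D0 D1 ω then 1 else 0

noncomputable def kappa (p q : ℝ) (Z D0 D1 : Ω → ℕ) (ω : Ω) : ℝ :=
  1 - (1 - obsI Z D0 D1 ω) * Z ω / p - obsI Z D0 D1 ω * (1 - Z ω) / q

lemma kappa_mul_eq_indicator_add_takerMoments (p q : ℝ) (g : ℝ × ℝ → ℝ) {Z D0 D1 : Ω → ℕ}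
    (Yp : ℕ → Ω → ℝ) {ω : Ω}
    (hz : Z ω = 0 ∨ Z ω = 1) (hmono : D0 ω ≤ D1 ω) (hemco : D0 ω < D1 ω → D0 ω = 0) :
    kappa p q Z D0 D1 ω * g (obsY Z D0 D1 Yp ω, obsI Z D0 D1 ω) =
      {ω | D0 ω = 0 ∧ 0 < D1 ω}.indicator
          (fun ω => g (obsY Z D0 D1 Yp ω, obsI Z D0 D1 ω)) ω
        + (1 - Z ω / p) * neverTakerMoment g (D0 ω, D1 ω, fun d => Yp d ω)
        + (1 - (1 - Z ω) / q) * alwaysTakerMoment g (D0 ω, D1 ω, fun d => Yp d ω) := by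
  have htype : (D0 ω = 0 ∧ D1 ω = 0) ∨ (D0 ω = 0 ∧ 0 < D1 ω) ∨ (D0 ω = D1 ω ∧ 0 < D1 ω) := by
    omega
  rcases hz with hz | hz <;>
    rcases htype with ⟨h0, h1⟩ | ⟨h0, h1⟩ | ⟨h0, h1⟩ <;>
    simp [kappa, obsI, obsY, obsD, neverTakerMoment, alwaysTakerMoment, hz, h0, h1,
      ne_of_gt]

section Observables

variable [MeasurableSpace Ω] {Z D0 D1 : Ω → ℕ}

lemma measurable_obsD (hZm : Measurable Z) (hD0m : Measurable D0) (hD1m : Measurable D1) :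
    Measurable (obsD Z D0 D1) :=
  Measurable.ite (hZm (measurableSet_singleton 1)) hD1m hD0m

lemma measurable_obsY (hZm : Measurable Z) (hD0m : Measurable D0) (hD1m : Measurable D1)
    {Yp : ℕ → Ω → ℝ} (hYm : ∀ d, Measurable (Yp d)) : Measurable (obsY Z D0 D1 Yp) :=
  measurable_eval_of_countable.comp
    ((measurable_pi_lambda _ hYm).prodMk (measurable_obsD hZm hD0m hD1m))

lemma measurable_obsI (hZm : Measurable Z) (hD0m : Measurable D0) (hD1m : Measurable D1) :
    Measurable (obsI Z D0 D1) :=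
  Measurable.ite (measurable_obsD hZm hD0m hD1m (.of_discrete (s := {n : ℕ | 0 < n})))
    measurable_const measurable_const

lemma Measurable.comp_obsY_obsI {g : ℝ × ℝ → ℝ} (hgm : Measurable g) (hZm : Measurable Z)
    (hD0m : Measurable D0) (hD1m : Measurable D1) {Yp : ℕ → Ω → ℝ}
    (hYm : ∀ d, Measurable (Yp d)) :
    Measurable fun ω => g (obsY Z D0 D1 Yp ω, obsI Z D0 D1 ω) :=
  hgm.comp ((measurable_obsY hZm hD0m hD1m hYm).prodMk (measurable_obsI hZm hD0m hD1m))

lemma pr_lt_eq_pr_compliers {μ : Measure Ω} (hemco : ∀ᵐ ω ∂μ, D0 ω < D1 ω → D0 ω = 0) :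
    pr μ {ω | D0 ω < D1 ω} = pr μ {ω | D0 ω = 0 ∧ 0 < D1 ω} := by
  refine congrArg ENNReal.toReal (measure_congr ?_)
  rw [Filter.eventuallyEq_set]
  filter_upwards [hemco] with ω hω
  show D0 ω < D1 ω ↔ D0 ω = 0 ∧ 0 < D1 ω
  omega

end Observables

theorem kappa_identifies_complier_moments_general
    [MeasurableSpace Ω] (μ : MeasureTheory.Measure Ω) [IsProbabilityMeasure μ]
    (Z D0 D1 : Ω → ℕ) (Yp : ℕ → Ω → ℝ)
    (hZ01 : ∀ ω, Z ω = 0 ∨ Z ω = 1)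
    (hZm : Measurable Z) (hD0m : Measurable D0) (hD1m : Measurable D1)
    (hYm : ∀ d, Measurable (Yp d))
    (hindep : IndepFun (fun ω => (D0 ω, D1 ω, fun d => Yp d ω)) Z μ)
    (hmono : ∀ᵐ ω ∂μ, D0 ω ≤ D1 ω)
    (hemco : ∀ᵐ ω ∂μ, D0 ω < D1 ω → D0 ω = 0)
    (hZ1pos : 0 < pr μ {ω | Z ω = 1}) (hZ1lt : pr μ {ω | Z ω = 1} < 1)
    (g : ℝ × ℝ → ℝ) (hgm : Measurable g) (hgb : ∃ C, ∀ x, |g x| ≤ C) :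
    (∫ ω, (1 - (1 - (if 0 < obsD Z D0 D1 ω then (1 : ℝ) else 0)) * (Z ω : ℝ) /
              pr μ {ω' | Z ω' = 1} -
            (if 0 < obsD Z D0 D1 ω then (1 : ℝ) else 0) * (1 - (Z ω : ℝ)) /
              pr μ {ω' | Z ω' = 0}) *
        g (obsY Z D0 D1 Yp ω, if 0 < obsD Z D0 D1 ω then 1 else 0) ∂μ) /
      pr μ {ω | D0 ω < D1 ω} =
    cE μ (fun ω => g (obsY Z D0 D1 Yp ω, if 0 < obsD Z D0 D1 ω then 1 else 0))
      {ω | D0 ω = 0 ∧ 0 < D1 ω} := by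
  obtain ⟨C, hC⟩ := hgb
  set p := pr μ {ω | Z ω = 1}
  set q := pr μ {ω | Z ω = 0}
  set W := fun ω => (D0 ω, D1 ω, fun d => Yp d ω)
  set f := fun ω => g (obsY Z D0 D1 Yp ω, obsI Z D0 D1 ω)
  set Cs := {ω | D0 ω = 0 ∧ 0 < D1 ω}
  have hWm : Measurable W := hD0m.prodMk (hD1m.prodMk (measurable_pi_lambda _ hYm))
  have hZ := integrable_natCast_of_zero_or_one (μ := μ) hZm hZ01
  have hWZ : W ⟂ᵢ[μ] fun ω => (Z ω : ℝ) := hindep.comp measurable_id measurable_from_top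
  have hWZ' : W ⟂ᵢ[μ] fun ω => 1 - (Z ω : ℝ) :=
    hindep.comp measurable_id (measurable_from_top.const_sub 1)
  have hN := hWZ.integrable_one_sub_div_mul_comp hZ hWm (measurable_neverTakerMoment hgm)
    (abs_neverTakerMoment_le hC) p
  have hA := hWZ'.integrable_one_sub_div_mul_comp ((integrable_const 1).sub hZ) hWm
    (measurable_alwaysTakerMoment hgm) (abs_alwaysTakerMoment_le hC) q
  have hCs : MeasurableSet Cs := (hD0m (measurableSet_singleton 0)).inter (hD1m .of_discrete)
  have hf : Integrable (Cs.indicator f) μ :=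
    (integrable_of_abs_le (hgm.comp_obsY_obsI hZm hD0m hD1m hYm) fun _ => hC _).indicator hCs
  have hκ : ∀ᵐ ω ∂μ, kappa p q Z D0 D1 ω * f ω = Cs.indicator f ω
      + (1 - Z ω / p) * neverTakerMoment g (W ω)
      + (1 - (1 - Z ω) / q) * alwaysTakerMoment g (W ω) := by
    filter_upwards [hmono, hemco] with ω hm he
    exact kappa_mul_eq_indicator_add_takerMoments p q g Yp (hZ01 ω) hm he
  change (∫ ω, kappa p q Z D0 D1 ω * f ω ∂μ) / _ = _
  rw [integral_congr_ae hκ, integral_add (by exact hf.add hN) hA, integral_add hf hN,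
    hWZ.integral_one_sub_div_mul_comp_eq_zero hZ hWm (measurable_neverTakerMoment hgm)
      (abs_neverTakerMoment_le hC) (integral_natCast_eq_pr_eq_one hZm hZ01) hZ1pos.ne',
    hWZ'.integral_one_sub_div_mul_comp_eq_zero ((integrable_const 1).sub hZ) hWm
      (measurable_alwaysTakerMoment hgm) (abs_alwaysTakerMoment_le hC)
      (integral_one_sub_natCast_eq_pr_eq_zero hZm hZ01)
      (by rw [pr_eq_zero_eq_one_sub_pr_eq_one hZm hZ01]; linarith),
    add_zero, add_zero, integral_indicator hCs, pr_lt_eq_pr_compliers hemco]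
  rfl

/-- Abadie-style kappa weighting identifies complier moments of
(Y, 1(D>0)) under LATE + EMCO. -/
theorem kappa_identifies_complier_moments
    [MeasurableSpace Ω] (μ : MeasureTheory.Measure Ω) [IsProbabilityMeasure μ]
    (Dbar : ℕ) (Z D0 D1 : Ω → ℕ) (Yp : ℕ → Ω → ℝ)
    (hZ01 : ∀ ω, Z ω = 0 ∨ Z ω = 1)
    (hZm : Measurable Z) (hD0m : Measurable D0) (hD1m : Measurable D1)
    (hD0b : ∀ ω, D0 ω ≤ Dbar) (hD1b : ∀ ω, D1 ω ≤ Dbar)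
    (hYm : ∀ d, Measurable (Yp d))
    (hindep : IndepFun (fun ω => (D0 ω, D1 ω, fun d => Yp d ω)) Z μ)
    (hmono : ∀ᵐ ω ∂μ, D0 ω ≤ D1 ω)
    (hemco : ∀ᵐ ω ∂μ, D0 ω < D1 ω → D0 ω = 0)
    (hZ1pos : 0 < pr μ {ω | Z ω = 1}) (hZ1lt : pr μ {ω | Z ω = 1} < 1)
    (hcomp : 0 < pr μ {ω | D0 ω < D1 ω})
    (g : ℝ × ℝ → ℝ) (hgm : Measurable g) (hgb : ∃ C, ∀ x, |g x| ≤ C) :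
    (∫ ω, (1 - (1 - (if 0 < obsD Z D0 D1 ω then (1 : ℝ) else 0)) * (Z ω : ℝ) /
              pr μ {ω' | Z ω' = 1} -
            (if 0 < obsD Z D0 D1 ω then (1 : ℝ) else 0) * (1 - (Z ω : ℝ)) /
              pr μ {ω' | Z ω' = 0}) *
        g (obsY Z D0 D1 Yp ω, if 0 < obsD Z D0 D1 ω then 1 else 0) ∂μ) /
      pr μ {ω | D0 ω < D1 ω} =
    cE μ (fun ω => g (obsY Z D0 D1 Yp ω, if 0 < obsD Z D0 D1 ω then 1 else 0))
      {ω | D0 ω = 0 ∧ 0 < D1 ω} :=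
  kappa_identifies_complier_moments_general μ Z D0 D1 Yp hZ01 hZm hD0m hD1m hYm hindep hmono hemco
    hZ1pos hZ1lt g hgm hgb
end

section
/- Under the LATE assumptions and EMCO, with κ_(d) := 1(D=d)·(Z − P(Z=1))/(P(Z=0)·P(Z=1)) for d > 0 and any bounded measurable g: E[κ_(d)·g(Y)] / P(D(1)=d>D(0)) = E[g(Y(d)) | D(1)=d, D(0)=0], provided P(D(1)=d>D(0)) > 0. -/
open MeasureTheory ProbabilityTheory

variable {Ω : Type*}

/-!
On `{Z = 1}` the weighted integrand is `1(D(1) = d) g(Y(d)) / P(Z = 1)` and on `{Z = 0}` it is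
`-1(D(0) = d) g(Y(d)) / P(Z = 0)`. Since `Z` is independent of `(D(0), D(1), Y(·))`, integrating
over `{Z = z}` just multiplies by `P(Z = z)`, so the weighted moment is
`E[1(D(1) = d) g(Y(d))] - E[1(D(0) = d) g(Y(d))]`. Monotonicity and EMCO make
`1(D(1) = d) - 1(D(0) = d) = 1(D(1) = d, D(0) = 0)` almost surely when `d > 0`: an individual
with `D(0) = d > 0` cannot be a complier, so has `D(1) = D(0)`.
-/

theorem ite_obsD_mul_kappa_eq {Z D0 D1 : Ω → ℕ} {Yp : ℕ → Ω → ℝ} {g : ℝ → ℝ} {d : ℕ}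
    {p q : ℝ} (hp : p ≠ 0) (hq : q ≠ 0) (hpq : p + q = 1) {ω : Ω} (hZ : Z ω = 0 ∨ Z ω = 1) :
    (if obsD Z D0 D1 ω = d then (1 : ℝ) else 0) * (((Z ω : ℝ) - p) / (q * p)) *
        g (obsY Z D0 D1 Yp ω) =
      {ω | Z ω = 1}.indicator ({ω | D1 ω = d}.indicator fun ω => g (Yp d ω)) ω / p -
        {ω | Z ω = 0}.indicator ({ω | D0 ω = d}.indicator fun ω => g (Yp d ω)) ω / q := by
  obtain rfl : q = 1 - p := by linarith
  rcases hZ with hZ | hZ <;>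
    by_cases hD : (if Z ω = 1 then D1 ω else D0 ω) = d <;>
    simp_all [obsD, obsY] <;>
    field_simp

section

variable [MeasurableSpace Ω] {μ : Measure Ω}

theorem ProbabilityTheory.IndepFun.indicator_comp {α β : Type*} [MeasurableSpace α]
    [MeasurableSpace β] {T : Ω → α} {Z : Ω → β} (hTZ : IndepFun T Z μ) {s : Set α}
    (hs : MeasurableSet s) {M : Type*} [Zero M] [MeasurableSpace M] {F : α → M}
    (hF : Measurable F) :
    IndepFun ((T ⁻¹' s).indicator (F ∘ T)) Z μ :=
  hTZ.comp (hF.indicator hs) measurable_id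

theorem ProbabilityTheory.IndepFun.setIntegral_preimage_eq_mul {β : Type*} [MeasurableSpace β]
    {X : Ω → ℝ} {Z : Ω → β} (hXZ : IndepFun X Z μ) (hX : AEMeasurable X μ) (hZ : Measurable Z)
    {s : Set β} (hs : MeasurableSet s) :
    ∫ ω in Z ⁻¹' s, X ω ∂μ = μ.real (Z ⁻¹' s) * ∫ ω, X ω ∂μ :=
  Indep.setIntegral_eq_mul (f := id) hZ.comap_le
    ((IndepFun_iff_Indep _ _ _).1 hXZ.symm) hX ⟨s, hs, rfl⟩ aestronglyMeasurable_id

theorem indicator_sub_indicator_ae_eq_complier {G : Type*} [AddGroup G] {D0 D1 : Ω → ℕ}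
    {d : ℕ} (hd : d ≠ 0) (hmono : ∀ᵐ ω ∂μ, D0 ω ≤ D1 ω)
    (hemco : ∀ᵐ ω ∂μ, D0 ω < D1 ω → D0 ω = 0) (f : Ω → G) :
    (fun ω => {ω | D1 ω = d}.indicator f ω - {ω | D0 ω = d}.indicator f ω) =ᵐ[μ]
      {ω | D1 ω = d ∧ D0 ω = 0}.indicator f := by
  filter_upwards [hmono, hemco] with ω hle hlt
  by_cases h1 : D1 ω = d <;> by_cases h0 : D0 ω = d <;>
    simp [Set.indicator_apply, h1, h0] <;> omega

theorem integral_kappa_eq_integral_sub [IsProbabilityMeasure μ] {Z D0 D1 : Ω → ℕ}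
    {Yp : ℕ → Ω → ℝ} {g : ℝ → ℝ} {d : ℕ}
    (hZ01 : ∀ ω, Z ω = 0 ∨ Z ω = 1) (hZm : Measurable Z)
    (hZ1pos : 0 < pr μ {ω | Z ω = 1}) (hZ1lt : pr μ {ω | Z ω = 1} < 1)
    (hint1 : Integrable ({ω | D1 ω = d}.indicator fun ω => g (Yp d ω)) μ)
    (hint0 : Integrable ({ω | D0 ω = d}.indicator fun ω => g (Yp d ω)) μ)
    (hind1 : IndepFun ({ω | D1 ω = d}.indicator fun ω => g (Yp d ω)) Z μ)
    (hind0 : IndepFun ({ω | D0 ω = d}.indicator fun ω => g (Yp d ω)) Z μ) :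
    ∫ ω, (if obsD Z D0 D1 ω = d then (1 : ℝ) else 0) *
        (((Z ω : ℝ) - pr μ {ω | Z ω = 1}) /
          (pr μ {ω | Z ω = 0} * pr μ {ω | Z ω = 1})) * g (obsY Z D0 D1 Yp ω) ∂μ =
      ∫ ω, {ω | D1 ω = d}.indicator (fun ω => g (Yp d ω)) ω ∂μ -
        ∫ ω, {ω | D0 ω = d}.indicator (fun ω => g (Yp d ω)) ω ∂μ := by
  set p := pr μ {ω | Z ω = 1}
  set q := pr μ {ω | Z ω = 0}
  set h1 := {ω | D1 ω = d}.indicator fun ω => g (Yp d ω)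
  set h0 := {ω | D0 ω = d}.indicator fun ω => g (Yp d ω)
  have hZ1 : MeasurableSet {ω | Z ω = 1} := hZm (measurableSet_singleton 1)
  have hZ0 : MeasurableSet {ω | Z ω = 0} := hZm (measurableSet_singleton 0)
  have hpq : p + q = 1 := by
    have hcompl : {ω | Z ω = 0} = {ω | Z ω = 1}ᶜ := by
      ext ω; rcases hZ01 ω with h | h <;> simp [h]
    simp only [p, q, pr, hcompl, ← measureReal_def, probReal_compl_eq_one_sub hZ1]
    ring
  have hp : p ≠ 0 := hZ1pos.ne'
  have hq : q ≠ 0 := by linarith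
  have hE1 : ∫ ω in {ω | Z ω = 1}, h1 ω ∂μ = p * ∫ ω, h1 ω ∂μ :=
    hind1.setIntegral_preimage_eq_mul hint1.aemeasurable hZm (measurableSet_singleton 1)
  have hE0 : ∫ ω in {ω | Z ω = 0}, h0 ω ∂μ = q * ∫ ω, h0 ω ∂μ :=
    hind0.setIntegral_preimage_eq_mul hint0.aemeasurable hZm (measurableSet_singleton 0)
  calc _ = ∫ ω, ({ω | Z ω = 1}.indicator h1 ω / p - {ω | Z ω = 0}.indicator h0 ω / q) ∂μ :=
        integral_congr_ae (ae_of_all _ fun ω => ite_obsD_mul_kappa_eq hp hq hpq (hZ01 ω))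
    _ = (∫ ω in {ω | Z ω = 1}, h1 ω ∂μ) / p - (∫ ω in {ω | Z ω = 0}, h0 ω ∂μ) / q := by
        rw [integral_sub ((hint1.indicator hZ1).div_const p) ((hint0.indicator hZ0).div_const q),
          integral_div, integral_div, integral_indicator hZ1, integral_indicator hZ0]
    _ = ∫ ω, h1 ω ∂μ - ∫ ω, h0 ω ∂μ := by
        rw [hE1, hE0, mul_div_cancel_left₀ _ hp, mul_div_cancel_left₀ _ hq]

end

theorem kappa_d_identifies_treated_moments_general
    [MeasurableSpace Ω] (μ : MeasureTheory.Measure Ω) [IsProbabilityMeasure μ]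
    (Z D0 D1 : Ω → ℕ) (Yp : ℕ → Ω → ℝ)
    (hZ01 : ∀ ω, Z ω = 0 ∨ Z ω = 1)
    (hZm : Measurable Z) (hD0m : Measurable D0) (hD1m : Measurable D1)
    (hYm : ∀ d, Measurable (Yp d))
    (hindep : IndepFun (fun ω => (D0 ω, D1 ω, fun d => Yp d ω)) Z μ)
    (hmono : ∀ᵐ ω ∂μ, D0 ω ≤ D1 ω)
    (hemco : ∀ᵐ ω ∂μ, D0 ω < D1 ω → D0 ω = 0)
    (hZ1pos : 0 < pr μ {ω | Z ω = 1}) (hZ1lt : pr μ {ω | Z ω = 1} < 1)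
    (d : ℕ) (hd : 0 < d)
    (g : ℝ → ℝ) (hgm : Measurable g) (hgb : ∃ C, ∀ x, |g x| ≤ C) :
    (∫ ω, (if obsD Z D0 D1 ω = d then (1 : ℝ) else 0) *
          (((Z ω : ℝ) - pr μ {ω' | Z ω' = 1}) /
            (pr μ {ω' | Z ω' = 0} * pr μ {ω' | Z ω' = 1})) *
        g (obsY Z D0 D1 Yp ω) ∂μ) /
      pr μ {ω | D1 ω = d ∧ D0 ω = 0} =
    cE μ (fun ω => g (Yp d ω)) {ω | D1 ω = d ∧ D0 ω = 0} := by
  obtain ⟨C, hC⟩ := hgb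
  have hgY : Integrable (fun ω => g (Yp d ω)) μ :=
    .of_bound (hgm.comp (hYm d)).aestronglyMeasurable C (ae_of_all _ fun ω => hC _)
  have hev : Measurable fun x : ℕ × ℕ × (ℕ → ℝ) => g (x.2.2 d) :=
    hgm.comp ((measurable_pi_apply d).comp (measurable_snd.comp measurable_snd))
  have hD1d : MeasurableSet {ω | D1 ω = d} := hD1m (measurableSet_singleton d)
  have hD0d : MeasurableSet {ω | D0 ω = d} := hD0m (measurableSet_singleton d)
  have hcompliers : MeasurableSet {ω | D1 ω = d ∧ D0 ω = 0} :=
    hD1d.inter (hD0m (measurableSet_singleton 0))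
  rw [cE, integral_kappa_eq_integral_sub hZ01 hZm hZ1pos hZ1lt (hgY.indicator hD1d)
    (hgY.indicator hD0d)
    (hindep.indicator_comp ((measurable_fst.comp measurable_snd) (measurableSet_singleton d)) hev)
    (hindep.indicator_comp (measurable_fst (measurableSet_singleton d)) hev),
    ← integral_sub (hgY.indicator hD1d) (hgY.indicator hD0d),
    integral_congr_ae (indicator_sub_indicator_ae_eq_complier hd.ne' hmono hemco _),
    integral_indicator hcompliers]

/-- kappa_(d) weighting identifies treated moments of d-type
compliers under LATE + EMCO. -/
theorem kappa_d_identifies_treated_moments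
    [MeasurableSpace Ω] (μ : MeasureTheory.Measure Ω) [IsProbabilityMeasure μ]
    (Dbar : ℕ) (Z D0 D1 : Ω → ℕ) (Yp : ℕ → Ω → ℝ)
    (hZ01 : ∀ ω, Z ω = 0 ∨ Z ω = 1)
    (hZm : Measurable Z) (hD0m : Measurable D0) (hD1m : Measurable D1)
    (hD0b : ∀ ω, D0 ω ≤ Dbar) (hD1b : ∀ ω, D1 ω ≤ Dbar)
    (hYm : ∀ d, Measurable (Yp d))
    (hindep : IndepFun (fun ω => (D0 ω, D1 ω, fun d => Yp d ω)) Z μ)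
    (hmono : ∀ᵐ ω ∂μ, D0 ω ≤ D1 ω)
    (hemco : ∀ᵐ ω ∂μ, D0 ω < D1 ω → D0 ω = 0)
    (hZ1pos : 0 < pr μ {ω | Z ω = 1}) (hZ1lt : pr μ {ω | Z ω = 1} < 1)
    (d : ℕ) (hd : 0 < d) (hdcomp : 0 < pr μ {ω | D1 ω = d ∧ D0 ω = 0})
    (g : ℝ → ℝ) (hgm : Measurable g) (hgb : ∃ C, ∀ x, |g x| ≤ C) :
    (∫ ω, (if obsD Z D0 D1 ω = d then (1 : ℝ) else 0) *
          (((Z ω : ℝ) - pr μ {ω' | Z ω' = 1}) /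
            (pr μ {ω' | Z ω' = 0} * pr μ {ω' | Z ω' = 1})) *
        g (obsY Z D0 D1 Yp ω) ∂μ) /
      pr μ {ω | D1 ω = d ∧ D0 ω = 0} =
    cE μ (fun ω => g (Yp d ω)) {ω | D1 ω = d ∧ D0 ω = 0} :=
  kappa_d_identifies_treated_moments_general μ Z D0 D1 Yp hZ01 hZm hD0m hD1m hYm hindep hmono hemco
    hZ1pos hZ1lt d hd g hgm hgb
end

section
/- Under the LATE assumptions and EMCO, with κ_(0) := 1(D=0)·((1−Z) − P(Z=0))/(P(Z=0)·P(Z=1)) and any bounded measurable g: E[κ_(0)·g(Y)] / P(D(1)>D(0)) = E[g(Y(0)) | D(1)>D(0)=0], provided P(D(1)>D(0)) > 0. -/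
open MeasureTheory ProbabilityTheory

variable {Ω : Type*}

/-!
On `{Z = 0}` the weight `κ₍₀₎` is `1(D(0) = 0) / P(Z = 0)`, on `{Z = 1}` it is
`-1(D(1) = 0) / P(Z = 1)`, and wherever it is nonzero `Y = Y(0)`. Independence of `Z` from
`(D(0), D(1), Y(·))` cancels the factors `P(Z = z)`, so
`E[κ₍₀₎ g(Y)] = E[g(Y(0)); D(0) = 0] - E[g(Y(0)); D(1) = 0]`. Monotonicity makes
`{D(1) = 0} ⊆ {D(0) = 0}` a.s., so this is `E[g(Y(0)); D(0) = 0 < D(1)]`, and by EMCO the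
compliers `{D(0) < D(1)}` are a.s. exactly `{D(0) = 0 < D(1)}`.
-/

namespace ProbabilityTheory

variable {α β : Type*} [MeasurableSpace Ω] [MeasurableSpace α] [MeasurableSpace β]
  {μ : Measure Ω}

theorem IndepFun.setIntegral_preimage_eq_measureReal_mul {X : Ω → α} {Z : Ω → β}
    (hXZ : IndepFun X Z μ) (hX : Measurable X) (hZ : Measurable Z) {f : α → ℝ}
    (hf : Measurable f) {S : Set β} (hS : MeasurableSet S) :
    ∫ ω in Z ⁻¹' S, f (X ω) ∂μ = μ.real (Z ⁻¹' S) * ∫ ω, f (X ω) ∂μ := by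
  have hind (ω : Ω) :
      (Z ⁻¹' S).indicator (fun ω => f (X ω)) ω = S.indicator 1 (Z ω) * f (X ω) := by
    by_cases h : Z ω ∈ S <;> simp [h]
  rw [← integral_indicator (hZ hS), integral_congr_ae (.of_forall hind),
    hXZ.symm.integral_fun_comp_mul_comp hZ.aemeasurable hX.aemeasurable
      ((measurable_one.indicator hS).aestronglyMeasurable) hf.aestronglyMeasurable]
  simp_rw [← Set.indicator_comp_right (g := 1) Z, Pi.one_comp, integral_indicator_one (hZ hS)]

end ProbabilityTheory

section InstrumentalVariables

variable {Z D0 D1 : Ω → ℕ} {Yp : ℕ → Ω → ℝ}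

theorem kappaZero_mul_obsY_eq_indicator_sub_indicator {p0 p1 : ℝ} (hp0 : p0 ≠ 0)
    (hp1 : p1 ≠ 0) (hsum : p0 + p1 = 1) (g : ℝ → ℝ) {ω : Ω} (hZ : Z ω = 0 ∨ Z ω = 1) :
    (if obsD Z D0 D1 ω = 0 then (1 : ℝ) else 0) * (((1 - (Z ω : ℝ)) - p0) / (p0 * p1)) *
        g (obsY Z D0 D1 Yp ω) =
      {ω | Z ω = 0}.indicator
          (fun ω => {ω | D0 ω = 0}.indicator (fun ω => g (Yp 0 ω)) ω / p0) ω -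
        {ω | Z ω = 1}.indicator
          (fun ω => {ω | D1 ω = 0}.indicator (fun ω => g (Yp 0 ω)) ω / p1) ω := by
  rcases hZ with hZ | hZ
  · have hweight : (1 - p0) / (p0 * p1) = p0⁻¹ := by
      rw [show 1 - p0 = p1 by linarith]; field_simp
    by_cases hD : D0 ω = 0 <;> simp [obsD, obsY, hZ, hD, hweight, inv_mul_eq_div]
  · have hweight : -p0 / (p0 * p1) = -p1⁻¹ := by field_simp
    by_cases hD : D1 ω = 0 <;> simp [obsD, obsY, hZ, hD, hweight, inv_mul_eq_div]

variable [MeasurableSpace Ω] {μ : Measure Ω}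

theorem pr_eq_zero_add_pr_eq_one [IsProbabilityMeasure μ] (hZm : Measurable Z)
    (hZ01 : ∀ ω, Z ω = 0 ∨ Z ω = 1) : pr μ {ω | Z ω = 0} + pr μ {ω | Z ω = 1} = 1 := by
  have hcompl : {ω | Z ω = 0} = {ω | Z ω = 1}ᶜ := by
    ext ω; rcases hZ01 ω with h | h <;> simp [h]
  rw [hcompl, add_comm]
  exact (measureReal_add_measureReal_compl (hZm (measurableSet_singleton 1))).trans probReal_univ

theorem integrable_comp_of_bounded [IsFiniteMeasure μ] {Y : Ω → ℝ} (hY : Measurable Y)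
    {g : ℝ → ℝ} (hgm : Measurable g) (hgb : ∃ C, ∀ x, |g x| ≤ C) :
    Integrable (fun ω => g (Y ω)) μ := by
  obtain ⟨C, hC⟩ := hgb
  exact .of_bound (hgm.comp hY).aestronglyMeasurable C (.of_forall fun ω => hC (Y ω))

theorem setIntegral_indicator_eq_pr_mul {D : Ω → ℕ} {Y : Ω → ℝ}
    (hind : IndepFun (fun ω => (D ω, Y ω)) Z μ) (hZm : Measurable Z) (hDm : Measurable D)
    (hYm : Measurable Y) {g : ℝ → ℝ} (hgm : Measurable g) (c : ℕ) :
    ∫ ω in {ω | Z ω = c}, {ω | D ω = 0}.indicator (fun ω => g (Y ω)) ω ∂μ =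
      pr μ {ω | Z ω = c} * ∫ ω in {ω | D ω = 0}, g (Y ω) ∂μ := by
  have hsD : MeasurableSet {ω | D ω = 0} := hDm (measurableSet_singleton 0)
  rw [← integral_indicator hsD]
  exact hind.setIntegral_preimage_eq_measureReal_mul (hDm.prodMk hYm) hZm
    (f := fun p => {p : ℕ × ℝ | p.1 = 0}.indicator (fun p => g p.2) p)
    ((hgm.comp measurable_snd).indicator (measurable_fst (measurableSet_singleton 0)))
    (measurableSet_singleton c)

theorem integral_kappaZero_mul [IsProbabilityMeasure μ] (hZ01 : ∀ ω, Z ω = 0 ∨ Z ω = 1)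
    (hZm : Measurable Z) (hD0m : Measurable D0) (hD1m : Measurable D1)
    (hYm : ∀ d, Measurable (Yp d))
    (hindep : IndepFun (fun ω => (D0 ω, D1 ω, fun d => Yp d ω)) Z μ)
    (hZ1pos : 0 < pr μ {ω | Z ω = 1}) (hZ1lt : pr μ {ω | Z ω = 1} < 1)
    {g : ℝ → ℝ} (hgm : Measurable g) (hgb : ∃ C, ∀ x, |g x| ≤ C) :
    ∫ ω, (if obsD Z D0 D1 ω = 0 then (1 : ℝ) else 0) *
          (((1 - (Z ω : ℝ)) - pr μ {ω' | Z ω' = 0}) /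
            (pr μ {ω' | Z ω' = 0} * pr μ {ω' | Z ω' = 1})) *
        g (obsY Z D0 D1 Yp ω) ∂μ =
      (∫ ω in {ω | D0 ω = 0}, g (Yp 0 ω) ∂μ) - ∫ ω in {ω | D1 ω = 0}, g (Yp 0 ω) ∂μ := by
  set p0 := pr μ {ω' | Z ω' = 0}
  set p1 := pr μ {ω' | Z ω' = 1}
  have hsum : p0 + p1 = 1 := pr_eq_zero_add_pr_eq_one hZm hZ01
  have hp0 : 0 < p0 := by linarith
  have hgY : Integrable (fun ω => g (Yp 0 ω)) μ := integrable_comp_of_bounded (hYm 0) hgm hgb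
  have hsZ (c : ℕ) : MeasurableSet {ω | Z ω = c} := hZm (measurableSet_singleton c)
  have hint {D : Ω → ℕ} (hDm : Measurable D) (c : ℕ) (p : ℝ) :
      Integrable ({ω | Z ω = c}.indicator
        fun ω => {ω | D ω = 0}.indicator (fun ω => g (Yp 0 ω)) ω / p) μ :=
    ((hgY.indicator (hDm (measurableSet_singleton 0))).div_const p).indicator (hsZ c)
  have hpart {D : Ω → ℕ} (hDm : Measurable D)
      (hind : IndepFun (fun ω => (D ω, Yp 0 ω)) Z μ) (c : ℕ) (hpc : pr μ {ω | Z ω = c} ≠ 0) :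
      ∫ ω in {ω | Z ω = c}, {ω | D ω = 0}.indicator (fun ω => g (Yp 0 ω)) ω /
        pr μ {ω | Z ω = c} ∂μ = ∫ ω in {ω | D ω = 0}, g (Yp 0 ω) ∂μ := by
    rw [integral_div, setIntegral_indicator_eq_pr_mul hind hZm hDm (hYm 0) hgm c,
      mul_div_cancel_left₀ _ hpc]
  have hind0 : IndepFun (fun ω => (D0 ω, Yp 0 ω)) Z μ :=
    hindep.comp (φ := fun p => (p.1, p.2.2 0)) (by fun_prop) measurable_id
  have hind1 : IndepFun (fun ω => (D1 ω, Yp 0 ω)) Z μ :=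
    hindep.comp (φ := fun p => (p.2.1, p.2.2 0)) (by fun_prop) measurable_id
  rw [integral_congr_ae (.of_forall fun ω =>
      kappaZero_mul_obsY_eq_indicator_sub_indicator hp0.ne' hZ1pos.ne' hsum g (hZ01 ω)),
    integral_sub (hint hD0m 0 p0) (hint hD1m 1 p1), integral_indicator (hsZ 0),
    integral_indicator (hsZ 1), hpart hD0m hind0 0 hp0.ne', hpart hD1m hind1 1 hZ1pos.ne']

theorem setIntegral_eq_zero_sub_setIntegral_eq_zero (hD0m : Measurable D0)
    (hD1m : Measurable D1) (hmono : ∀ᵐ ω ∂μ, D0 ω ≤ D1 ω) {h : Ω → ℝ} (hh : Integrable h μ) :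
    (∫ ω in {ω | D0 ω = 0}, h ω ∂μ) - ∫ ω in {ω | D1 ω = 0}, h ω ∂μ =
      ∫ ω in {ω | D0 ω = 0 ∧ 0 < D1 ω}, h ω ∂μ := by
  have hae : {ω | D1 ω = 0} =ᵐ[μ] {ω | D0 ω = 0 ∧ D1 ω = 0} := by
    refine Filter.eventuallyEq_set.2 ?_
    filter_upwards [hmono] with ω hω
    omega
  have hmeas : MeasurableSet {ω | D0 ω = 0 ∧ D1 ω = 0} :=
    (hD0m (measurableSet_singleton 0)).inter (hD1m (measurableSet_singleton 0))
  rw [setIntegral_congr_set hae,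
    ← setIntegral_sdiff (s := {ω | D0 ω = 0}) hmeas hh.integrableOn fun ω hω => hω.1]
  congr 2
  ext ω
  simp only [Set.mem_sdiff, Set.mem_ofPred_eq]
  omega

theorem pr_lt_eq_pr_eq_zero_and_pos (hmono : ∀ᵐ ω ∂μ, D0 ω ≤ D1 ω)
    (hemco : ∀ᵐ ω ∂μ, D0 ω < D1 ω → D0 ω = 0) :
    pr μ {ω | D0 ω < D1 ω} = pr μ {ω | D0 ω = 0 ∧ 0 < D1 ω} :=
  measureReal_congr <| Filter.eventuallyEq_set.2 <| by
    filter_upwards [hmono, hemco] with ω hle hemco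
    omega

end InstrumentalVariables

theorem kappa_zero_identifies_untreated_moments_general
    [MeasurableSpace Ω] (μ : MeasureTheory.Measure Ω) [IsProbabilityMeasure μ]
    (Z D0 D1 : Ω → ℕ) (Yp : ℕ → Ω → ℝ)
    (hZ01 : ∀ ω, Z ω = 0 ∨ Z ω = 1)
    (hZm : Measurable Z) (hD0m : Measurable D0) (hD1m : Measurable D1)
    (hYm : ∀ d, Measurable (Yp d))
    (hindep : IndepFun (fun ω => (D0 ω, D1 ω, fun d => Yp d ω)) Z μ)
    (hmono : ∀ᵐ ω ∂μ, D0 ω ≤ D1 ω)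
    (hemco : ∀ᵐ ω ∂μ, D0 ω < D1 ω → D0 ω = 0)
    (hZ1pos : 0 < pr μ {ω | Z ω = 1}) (hZ1lt : pr μ {ω | Z ω = 1} < 1)
    (g : ℝ → ℝ) (hgm : Measurable g) (hgb : ∃ C, ∀ x, |g x| ≤ C) :
    (∫ ω, (if obsD Z D0 D1 ω = 0 then (1 : ℝ) else 0) *
          (((1 - (Z ω : ℝ)) - pr μ {ω' | Z ω' = 0}) /
            (pr μ {ω' | Z ω' = 0} * pr μ {ω' | Z ω' = 1})) *
        g (obsY Z D0 D1 Yp ω) ∂μ) /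
      pr μ {ω | D0 ω < D1 ω} =
    cE μ (fun ω => g (Yp 0 ω)) {ω | D0 ω = 0 ∧ 0 < D1 ω} := by
  rw [integral_kappaZero_mul hZ01 hZm hD0m hD1m hYm hindep hZ1pos hZ1lt hgm hgb,
    setIntegral_eq_zero_sub_setIntegral_eq_zero hD0m hD1m hmono
      (integrable_comp_of_bounded (hYm 0) hgm hgb),
    pr_lt_eq_pr_eq_zero_and_pos hmono hemco, cE]

/-- kappa_(0) weighting identifies untreated moments of compliers
under LATE + EMCO. -/
theorem kappa_zero_identifies_untreated_moments
    [MeasurableSpace Ω] (μ : MeasureTheory.Measure Ω) [IsProbabilityMeasure μ]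
    (Dbar : ℕ) (Z D0 D1 : Ω → ℕ) (Yp : ℕ → Ω → ℝ)
    (hZ01 : ∀ ω, Z ω = 0 ∨ Z ω = 1)
    (hZm : Measurable Z) (hD0m : Measurable D0) (hD1m : Measurable D1)
    (hD0b : ∀ ω, D0 ω ≤ Dbar) (hD1b : ∀ ω, D1 ω ≤ Dbar)
    (hYm : ∀ d, Measurable (Yp d))
    (hindep : IndepFun (fun ω => (D0 ω, D1 ω, fun d => Yp d ω)) Z μ)
    (hmono : ∀ᵐ ω ∂μ, D0 ω ≤ D1 ω)
    (hemco : ∀ᵐ ω ∂μ, D0 ω < D1 ω → D0 ω = 0)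
    (hZ1pos : 0 < pr μ {ω | Z ω = 1}) (hZ1lt : pr μ {ω | Z ω = 1} < 1)
    (hcomp : 0 < pr μ {ω | D0 ω < D1 ω})
    (g : ℝ → ℝ) (hgm : Measurable g) (hgb : ∃ C, ∀ x, |g x| ≤ C) :
    (∫ ω, (if obsD Z D0 D1 ω = 0 then (1 : ℝ) else 0) *
          (((1 - (Z ω : ℝ)) - pr μ {ω' | Z ω' = 0}) /
            (pr μ {ω' | Z ω' = 0} * pr μ {ω' | Z ω' = 1})) *
        g (obsY Z D0 D1 Yp ω) ∂μ) /
      pr μ {ω | D0 ω < D1 ω} =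
    cE μ (fun ω => g (Yp 0 ω)) {ω | D0 ω = 0 ∧ 0 < D1 ω} :=
  kappa_zero_identifies_untreated_moments_general μ Z D0 D1 Yp hZ01 hZm hD0m hD1m hYm hindep hmono
    hemco hZ1pos hZ1lt g hgm hgb
end

section
/- The two-factor hurdle selection model satisfies monotonicity and EMCO: if D(z) = 0 when π₀(z) ≥ U^Ext, and D(z) = d > 0 when π₀(z) < U^Ext and π_{d+1} ≤ U^Int < π_d (with π₁ ≥ π₂ ≥ ... ≥ π_{D̄+1}, the intervals [π_{d+1}, π_d) partitioning [0,1), and π₀(1) ≤ π₀(0)), then D(1) ≥ D(0) always, and D(1) > D(0) implies D(0) = 0. -/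
/-- the two-factor hurdle selection model satisfies monotonicity
and EMCO. -/
theorem hurdle_model_satisfies_monotonicity_and_emco
    {Ω : Type*} (Dbar : ℕ) (hDbar : 1 ≤ Dbar)
    (UExt UInt : Ω → ℝ)
    (hUExt : ∀ ω, UExt ω ∈ Set.Ico (0 : ℝ) 1)
    (hUInt : ∀ ω, UInt ω ∈ Set.Ico (0 : ℝ) 1)
    (π0 : ℕ → ℝ) (hπ0 : π0 1 ≤ π0 0)
    (π : ℕ → ℝ) (hπone : π 1 = 1) (hπtop : π (Dbar + 1) = 0)
    (hπmono : ∀ d, 1 ≤ d → d ≤ Dbar → π (d + 1) ≤ π d)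
    (D : ℕ → Ω → ℕ)
    (hDzero : ∀ z, z ≤ 1 → ∀ ω, UExt ω ≤ π0 z → D z ω = 0)
    (hDpos : ∀ z, z ≤ 1 → ∀ ω, ∀ d, 1 ≤ d → d ≤ Dbar →
      π0 z < UExt ω → π (d + 1) ≤ UInt ω → UInt ω < π d → D z ω = d) :
    ∀ ω, D 0 ω ≤ D 1 ω ∧ (D 0 ω < D 1 ω → D 0 ω = 0) := by
  intro ω
  by_cases hc : UExt ω ≤ π0 0
  · have h0 : D 0 ω = 0 := hDzero 0 (by omega) ω hc
    exact ⟨by rw [h0]; exact Nat.zero_le _, fun _ => h0⟩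
  · push_neg at hc
    have hc1 : π0 1 < UExt ω := lt_of_le_of_lt hπ0 hc
    have key : ∀ k n, 1 ≤ n → n ≤ Dbar → Dbar - n ≤ k → UInt ω < π n →
        ∃ d, 1 ≤ d ∧ d ≤ Dbar ∧ π (d + 1) ≤ UInt ω ∧ UInt ω < π d := by
      intro k
      induction k with
      | zero =>
        intro n h1 h2 h3 h4
        have hn : n = Dbar := by omega
        exact ⟨n, h1, h2, by rw [hn, hπtop]; exact (hUInt ω).1, h4⟩
      | succ k ih =>
        intro n h1 h2 h3 h4
        by_cases hle : π (n + 1) ≤ UInt ω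
        · exact ⟨n, h1, h2, hle, h4⟩
        · push_neg at hle
          have hn : n < Dbar := by
            rcases lt_or_eq_of_le h2 with h | h
            · exact h
            · subst h; rw [hπtop] at hle
              exact absurd (hUInt ω).1 (not_le.mpr hle)
          exact ih (n + 1) (by omega) (by omega) (by omega) hle
    obtain ⟨d, hd1, hd2, hd3, hd4⟩ :=
      key Dbar 1 le_rfl hDbar (by omega) (by rw [hπone]; exact (hUInt ω).2)
    have h0 : D 0 ω = d := hDpos 0 (by omega) ω d hd1 hd2 hc hd3 hd4
    have h1 : D 1 ω = d := hDpos 1 le_rfl ω d hd1 hd2 hc1 hd3 hd4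
    rw [h0, h1]
    exact ⟨le_rfl, fun h => absurd h (lt_irrefl d)⟩
end

section
/- Under the LATE assumptions and EMCO, the shares of each complier type are identified: P(D(1)>D(0)) = P(D>0|Z=1) − P(D>0|Z=0), and for each d > 0, P(D(1)=d, D(0)=0) = P(D=d|Z=1) − P(D=d|Z=0). -/
open MeasureTheory ProbabilityTheory

variable {Ω : Type*}

lemma cP_indep [MeasurableSpace Ω] (μ : MeasureTheory.Measure Ω) [IsProbabilityMeasure μ]
    (f : Ω → ℕ × ℕ) (Z : Ω → ℕ)
    (hindep : IndepFun f Z μ) (S : Set (ℕ × ℕ)) (z : ℕ)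
    (hpos : 0 < pr μ {ω | Z ω = z}) :
    cP μ (f ⁻¹' S) {ω | Z ω = z} = pr μ (f ⁻¹' S) := by
  have hS : MeasurableSet S := (Set.to_countable S).measurableSet
  have hz : {ω | Z ω = z} = Z ⁻¹' {z} := rfl
  have hmul := hindep.measure_inter_preimage_eq_mul S {z} hS (measurableSet_singleton z)
  have hpos' : pr μ (Z ⁻¹' {z}) ≠ 0 := by rw [← hz]; exact ne_of_gt hpos
  simp only [cP, pr, hz, hmul, ENNReal.toReal_mul] at *
  field_simp

lemma split_pr [MeasurableSpace Ω] (μ : MeasureTheory.Measure Ω) [IsProbabilityMeasure μ]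
    (A B C : Set Ω) (hC : MeasurableSet C)
    (heq : ∀ᵐ ω ∂μ, ω ∈ A ↔ ω ∈ B ∪ C)
    (hdisj : ∀ᵐ ω ∂μ, ¬(ω ∈ B ∧ ω ∈ C)) :
    pr μ A = pr μ B + pr μ C := by
  have hae : A =ᵐ[μ] ((B ∪ C : Set Ω) : Set Ω) := by
    rw [Filter.eventuallyEq_set]; exact heq
  have h0 : μ (B ∩ C) = 0 := by
    have := ae_iff.mp hdisj
    refine measure_mono_null (fun ω h => ?_) this
    simp only [Set.mem_setOf_eq, not_not]
    exact h
  have hABC : μ A = μ B + μ C := by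
    rw [measure_congr hae, measure_union₀ hC.nullMeasurableSet h0]
  simp only [pr, hABC, ENNReal.toReal_add (measure_ne_top μ B) (measure_ne_top μ C)]

/-- under LATE + EMCO, complier shares are identified. -/
theorem emco_complier_shares_identified
    [MeasurableSpace Ω] (μ : MeasureTheory.Measure Ω) [IsProbabilityMeasure μ]
    (Dbar : ℕ) (Z D0 D1 : Ω → ℕ)
    (hZ01 : ∀ ω, Z ω = 0 ∨ Z ω = 1)
    (hZm : Measurable Z) (hD0m : Measurable D0) (hD1m : Measurable D1)
    (hD0b : ∀ ω, D0 ω ≤ Dbar) (hD1b : ∀ ω, D1 ω ≤ Dbar)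
    (hindep : IndepFun (fun ω => (D0 ω, D1 ω)) Z μ)
    (hmono : ∀ᵐ ω ∂μ, D0 ω ≤ D1 ω)
    (hemco : ∀ᵐ ω ∂μ, D0 ω < D1 ω → D0 ω = 0)
    (hZ1pos : 0 < pr μ {ω | Z ω = 1}) (hZ1lt : pr μ {ω | Z ω = 1} < 1) :
    pr μ {ω | D0 ω < D1 ω} =
      cP μ {ω | 0 < obsD Z D0 D1 ω} {ω | Z ω = 1} -
        cP μ {ω | 0 < obsD Z D0 D1 ω} {ω | Z ω = 0} ∧
    ∀ d : ℕ, 0 < d →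
      pr μ {ω | D1 ω = d ∧ D0 ω = 0} =
        cP μ {ω | obsD Z D0 D1 ω = d} {ω | Z ω = 1} -
          cP μ {ω | obsD Z D0 D1 ω = d} {ω | Z ω = 0} := by
  set f : Ω → ℕ × ℕ := fun ω => (D0 ω, D1 ω) with hf_def
  -- P(Z=0) > 0
  have hcompl : {ω | Z ω = 0} = {ω | Z ω = 1}ᶜ := by
    ext ω; simp only [Set.mem_setOf_eq, Set.mem_compl_iff]
    rcases hZ01 ω with h | h <;> simp [h]
  have hZ1meas : MeasurableSet {ω | Z ω = 1} := hZm (measurableSet_singleton 1)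
  have hZ0pos : 0 < pr μ {ω | Z ω = 0} := by
    have h1 : μ {ω | Z ω = 1}ᶜ = 1 - μ {ω | Z ω = 1} :=
      prob_compl_eq_one_sub hZ1meas
    have h2 : pr μ {ω | Z ω = 0} = 1 - pr μ {ω | Z ω = 1} := by
      rw [hcompl]
      simp only [pr, h1]
      rw [ENNReal.toReal_sub_of_le prob_le_one ENNReal.one_ne_top]
      simp
    rw [h2]; linarith
  -- generic conditional probability identification
  have key : ∀ (G : Set Ω) (S : Set (ℕ × ℕ)) (z : ℕ), 0 < pr μ {ω | Z ω = z} →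
      (G ∩ {ω | Z ω = z} = f ⁻¹' S ∩ {ω | Z ω = z}) →
      cP μ G {ω | Z ω = z} = pr μ (f ⁻¹' S) := by
    intro G S z hz hGS
    have : cP μ G {ω | Z ω = z} = cP μ (f ⁻¹' S) {ω | Z ω = z} := by
      simp only [cP, hGS]
    rw [this, cP_indep μ f Z hindep S z hz]
  -- part 1
  have e1 : {ω | 0 < obsD Z D0 D1 ω} ∩ {ω | Z ω = 1}
      = f ⁻¹' {p | 0 < p.2} ∩ {ω | Z ω = 1} := by
    ext ω
    simp only [Set.mem_inter_iff, Set.mem_setOf_eq, Set.mem_preimage, obsD, hf_def]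
    constructor <;> rintro ⟨h1, h2⟩ <;> simp [h2] at h1 ⊢ <;> exact h1
  have e0 : {ω | 0 < obsD Z D0 D1 ω} ∩ {ω | Z ω = 0}
      = f ⁻¹' {p | 0 < p.1} ∩ {ω | Z ω = 0} := by
    ext ω
    simp only [Set.mem_inter_iff, Set.mem_setOf_eq, Set.mem_preimage, obsD, hf_def]
    constructor <;> rintro ⟨h1, h2⟩ <;> simp [h2] at h1 ⊢ <;> exact h1
  have k1 := key _ _ 1 hZ1pos e1
  have k0 := key _ _ 0 hZ0pos e0
  have split1 : pr μ (f ⁻¹' {p | 0 < p.2})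
      = pr μ {ω | D0 ω < D1 ω} + pr μ (f ⁻¹' {p | 0 < p.1}) := by
    apply split_pr μ _ _ _ (hD0m (by exact (Set.to_countable _).measurableSet :
      MeasurableSet {n : ℕ | 0 < n}))
    · filter_upwards [hmono] with ω h
      simp only [Set.mem_preimage, Set.mem_setOf_eq, Set.mem_singleton_iff, Set.mem_union, hf_def]
      omega
    · filter_upwards [hemco] with ω h
      simp only [Set.mem_preimage, Set.mem_setOf_eq, Set.mem_singleton_iff, hf_def, not_and]
      intro h1
      have := h h1
      omega
  refine ⟨by rw [k1, k0, split1]; ring, ?_⟩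
  -- part 2
  intro d hd
  have e1d : {ω | obsD Z D0 D1 ω = d} ∩ {ω | Z ω = 1}
      = f ⁻¹' {p | p.2 = d} ∩ {ω | Z ω = 1} := by
    ext ω
    simp only [Set.mem_inter_iff, Set.mem_setOf_eq, Set.mem_preimage, obsD, hf_def]
    constructor <;> rintro ⟨h1, h2⟩ <;> simp [h2] at h1 ⊢ <;> exact h1
  have e0d : {ω | obsD Z D0 D1 ω = d} ∩ {ω | Z ω = 0}
      = f ⁻¹' {p | p.1 = d} ∩ {ω | Z ω = 0} := by
    ext ω
    simp only [Set.mem_inter_iff, Set.mem_setOf_eq, Set.mem_preimage, obsD, hf_def]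
    constructor <;> rintro ⟨h1, h2⟩ <;> simp [h2] at h1 ⊢ <;> exact h1
  have k1d := key _ _ 1 hZ1pos e1d
  have k0d := key _ _ 0 hZ0pos e0d
  have split2 : pr μ (f ⁻¹' {p | p.2 = d})
      = pr μ {ω | D1 ω = d ∧ D0 ω = 0} + pr μ (f ⁻¹' {p | p.1 = d}) := by
    apply split_pr μ _ _ _ (hD0m (measurableSet_singleton d))
    · filter_upwards [hmono, hemco] with ω h1 h2
      simp only [Set.mem_preimage, Set.mem_setOf_eq, Set.mem_singleton_iff, Set.mem_union, hf_def]
      constructor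
      · intro h
        rcases lt_or_eq_of_le h1 with hlt | heq'
        · exact Or.inl ⟨h, h2 hlt⟩
        · omega
      · rintro (⟨h, _⟩ | h)
        · exact h
        · rcases lt_or_eq_of_le h1 with hlt | heq'
          · have := h2 hlt; omega
          · omega
    · filter_upwards [] with ω
      simp only [Set.mem_preimage, Set.mem_setOf_eq, Set.mem_singleton_iff, hf_def, not_and]
      rintro ⟨_, h0⟩
      omega
  rw [k1d, k0d, split2]; ring
end

section
/- In the three-level DGP of Table 1, where P(D(0)=d) = (a, b, 1−a−b) and P(D(1)=d) = (a−Δ₁−Δ₂, b+Δ₁−Δᵢ, 1−a−b+Δ₂+Δᵢ) for d = 0,1,2 with Δ₁, Δ₂, Δᵢ ≥ 0: the stochastic-dominance test conditions P(D=1|Z=1) ≥ P(D=1|Z=0) and P(D=2|Z=1) ≥ P(D=2|Z=0) hold if and only if Δᵢ ≤ Δ₁; in particular if 0 < Δᵢ ≤ Δ₁ the test conditions are satisfied even though EMCO is violated (Δᵢ > 0). -/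
open MeasureTheory ProbabilityTheory

variable {Ω : Type*}

/-- in the three-level DGP of Table 1, the stochastic-dominance
test conditions hold iff Δᵢ ≤ Δ₁; in particular, when 0 < Δᵢ ≤ Δ₁ the test is
satisfied even though EMCO is violated. -/
theorem table1_dgp_test_iff
    [MeasurableSpace Ω] (μ : MeasureTheory.Measure Ω) [IsProbabilityMeasure μ]
    (Z D0 D1 : Ω → ℕ) (a b Δ1 Δ2 Δi : ℝ)
    (hZ01 : ∀ ω, Z ω = 0 ∨ Z ω = 1)
    (hZm : Measurable Z) (hD0m : Measurable D0) (hD1m : Measurable D1)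
    (hD0b : ∀ ω, D0 ω ≤ 2) (hD1b : ∀ ω, D1 ω ≤ 2)
    (hindep : IndepFun (fun ω => (D0 ω, D1 ω)) Z μ)
    (htypes : ∀ᵐ ω ∂μ, D0 ω = D1 ω ∨ (D0 ω = 0 ∧ D1 ω = 1) ∨
      (D0 ω = 0 ∧ D1 ω = 2) ∨ (D0 ω = 1 ∧ D1 ω = 2))
    (hΔ1 : pr μ {ω | D0 ω = 0 ∧ D1 ω = 1} = Δ1)
    (hΔ2 : pr μ {ω | D0 ω = 0 ∧ D1 ω = 2} = Δ2)
    (hΔi : pr μ {ω | D0 ω = 1 ∧ D1 ω = 2} = Δi)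
    (ha : pr μ {ω | D0 ω = 0} = a) (hb : pr μ {ω | D0 ω = 1} = b)
    (hΔ1nn : 0 ≤ Δ1) (hΔ2nn : 0 ≤ Δ2) (hΔinn : 0 ≤ Δi)
    (haΔ : Δ1 + Δ2 ≤ a) (hbΔ : Δi ≤ b)
    (hZ1pos : 0 < pr μ {ω | Z ω = 1}) (hZ1lt : pr μ {ω | Z ω = 1} < 1) :
    ((cP μ {ω | obsD Z D0 D1 ω = 1} {ω | Z ω = 1} ≥
        cP μ {ω | obsD Z D0 D1 ω = 1} {ω | Z ω = 0} ∧
      cP μ {ω | obsD Z D0 D1 ω = 2} {ω | Z ω = 1} ≥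
        cP μ {ω | obsD Z D0 D1 ω = 2} {ω | Z ω = 0}) ↔ Δi ≤ Δ1) ∧
    (0 < Δi → Δi ≤ Δ1 →
      (cP μ {ω | obsD Z D0 D1 ω = 1} {ω | Z ω = 1} ≥
          cP μ {ω | obsD Z D0 D1 ω = 1} {ω | Z ω = 0} ∧
        cP μ {ω | obsD Z D0 D1 ω = 2} {ω | Z ω = 1} ≥
          cP μ {ω | obsD Z D0 D1 ω = 2} {ω | Z ω = 0} ∧
        0 < pr μ {ω | 0 < D0 ω ∧ D0 ω < D1 ω})) := by

  -- measurability
  have mD0 : ∀ d : ℕ, MeasurableSet {ω | D0 ω = d} := fun d => hD0m (measurableSet_singleton d)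
  have mD1 : ∀ d : ℕ, MeasurableSet {ω | D1 ω = d} := fun d => hD1m (measurableSet_singleton d)
  have mZ : ∀ z : ℕ, MeasurableSet {ω | Z ω = z} := fun z => hZm (measurableSet_singleton z)
  have prZ1ne : pr μ {ω | Z ω = 1} ≠ 0 := ne_of_gt hZ1pos
  -- P(Z=0) > 0
  have hZc : {ω | Z ω = 0} = {ω | Z ω = 1}ᶜ := by
    ext ω; rcases hZ01 ω with h | h <;> simp [h]
  have prZ0 : pr μ {ω | Z ω = 0} = 1 - pr μ {ω | Z ω = 1} := by
    rw [hZc]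
    unfold pr
    rw [measure_compl (mZ 1) (measure_ne_top μ _), measure_univ,
      ENNReal.toReal_sub_of_le prob_le_one (by simp), ENNReal.toReal_one]
  have prZ0ne : pr μ {ω | Z ω = 0} ≠ 0 := by rw [prZ0]; intro h; linarith
  -- independence
  have keyd1 : ∀ d z : ℕ, pr μ ({ω | D1 ω = d} ∩ {ω | Z ω = z})
      = pr μ {ω | D1 ω = d} * pr μ {ω | Z ω = z} := by
    intro d z
    have h := hindep.measure_inter_preimage_eq_mul (Set.univ ×ˢ ({d} : Set ℕ)) ({z} : Set ℕ)
      (MeasurableSet.univ.prod (measurableSet_singleton d)) (measurableSet_singleton z)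
    have hp : (fun ω => (D0 ω, D1 ω)) ⁻¹' (Set.univ ×ˢ ({d} : Set ℕ)) = {ω | D1 ω = d} := by
      ext ω; simp [eq_comm]
    have hz : Z ⁻¹' ({z} : Set ℕ) = {ω | Z ω = z} := by rfl
    rw [hp, hz] at h
    unfold pr
    rw [h, ENNReal.toReal_mul]
  have keyd0 : ∀ d z : ℕ, pr μ ({ω | D0 ω = d} ∩ {ω | Z ω = z})
      = pr μ {ω | D0 ω = d} * pr μ {ω | Z ω = z} := by
    intro d z
    have h := hindep.measure_inter_preimage_eq_mul (({d} : Set ℕ) ×ˢ Set.univ) ({z} : Set ℕ)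
      ((measurableSet_singleton d).prod MeasurableSet.univ) (measurableSet_singleton z)
    have hp : (fun ω => (D0 ω, D1 ω)) ⁻¹' (({d} : Set ℕ) ×ˢ Set.univ) = {ω | D0 ω = d} := by
      ext ω; simp [eq_comm]
    have hz : Z ⁻¹' ({z} : Set ℕ) = {ω | Z ω = z} := by rfl
    rw [hp, hz] at h
    unfold pr
    rw [h, ENNReal.toReal_mul]
  -- cP formulas
  have cP1 : ∀ d : ℕ, cP μ {ω | obsD Z D0 D1 ω = d} {ω | Z ω = 1} = pr μ {ω | D1 ω = d} := by
    intro d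
    have hset : {ω | obsD Z D0 D1 ω = d} ∩ {ω | Z ω = 1}
        = {ω | D1 ω = d} ∩ {ω | Z ω = 1} := by
      ext ω
      simp only [Set.mem_inter_iff, Set.mem_setOf_eq, obsD]
      constructor
      · rintro ⟨h1, h2⟩; rw [if_pos h2] at h1; exact ⟨h1, h2⟩
      · rintro ⟨h1, h2⟩; rw [if_pos h2]; exact ⟨h1, h2⟩
    unfold cP
    rw [hset, keyd1, mul_div_assoc, div_self prZ1ne, mul_one]
  have cP0 : ∀ d : ℕ, cP μ {ω | obsD Z D0 D1 ω = d} {ω | Z ω = 0} = pr μ {ω | D0 ω = d} := by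
    intro d
    have hset : {ω | obsD Z D0 D1 ω = d} ∩ {ω | Z ω = 0}
        = {ω | D0 ω = d} ∩ {ω | Z ω = 0} := by
      ext ω
      simp only [Set.mem_inter_iff, Set.mem_setOf_eq, obsD]
      constructor
      · rintro ⟨h1, h2⟩; rw [if_neg (by omega)] at h1; exact ⟨h1, h2⟩
      · rintro ⟨h1, h2⟩; rw [if_neg (by omega)]; exact ⟨h1, h2⟩
    unfold cP
    rw [hset, keyd0, mul_div_assoc, div_self prZ0ne, mul_one]
  -- a.e. set equality tool
  have aeEq : ∀ s t : Set Ω, (∀ ω, (D0 ω = D1 ω ∨ (D0 ω = 0 ∧ D1 ω = 1) ∨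
      (D0 ω = 0 ∧ D1 ω = 2) ∨ (D0 ω = 1 ∧ D1 ω = 2)) → (ω ∈ s ↔ ω ∈ t)) →
      μ s = μ t := by
    intro s t h
    apply measure_congr
    rw [Filter.eventuallyEq_set]
    filter_upwards [htypes] with ω hω using h ω hω
  -- decomposition of P(D1 = 1)
  have h1 : pr μ {ω | D1 ω = 1} = pr μ {ω | D0 ω = 1 ∧ D1 ω = 1} + Δ1 := by
    have e : μ {ω | D1 ω = 1}
        = μ ({ω | D0 ω = 1 ∧ D1 ω = 1} ∪ {ω | D0 ω = 0 ∧ D1 ω = 1}) := by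
      apply aeEq
      intro ω hω
      simp only [Set.mem_setOf_eq, Set.mem_union]
      omega
    have hdisj : Disjoint {ω | D0 ω = 1 ∧ D1 ω = 1} {ω | D0 ω = 0 ∧ D1 ω = 1} := by
      rw [Set.disjoint_left]; rintro ω ⟨h1, _⟩ ⟨h2, _⟩; omega
    rw [← hΔ1]
    unfold pr
    rw [e, measure_union hdisj ((mD0 0).inter (mD1 1)),
      ENNReal.toReal_add (measure_ne_top μ _) (measure_ne_top μ _)]
  -- decomposition of P(D0 = 1)
  have h2 : pr μ {ω | D0 ω = 1} = pr μ {ω | D0 ω = 1 ∧ D1 ω = 1} + Δi := by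
    have e : μ {ω | D0 ω = 1}
        = μ ({ω | D0 ω = 1 ∧ D1 ω = 1} ∪ {ω | D0 ω = 1 ∧ D1 ω = 2}) := by
      apply aeEq
      intro ω hω
      simp only [Set.mem_setOf_eq, Set.mem_union]
      omega
    have hdisj : Disjoint {ω | D0 ω = 1 ∧ D1 ω = 1} {ω | D0 ω = 1 ∧ D1 ω = 2} := by
      rw [Set.disjoint_left]; rintro ω ⟨_, h1⟩ ⟨_, h2⟩; omega
    rw [← hΔi]
    unfold pr
    rw [e, measure_union hdisj ((mD0 1).inter (mD1 2)),
      ENNReal.toReal_add (measure_ne_top μ _) (measure_ne_top μ _)]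
  -- decomposition of P(D1 = 2)
  have h3 : pr μ {ω | D1 ω = 2} = pr μ {ω | D0 ω = 2} + Δ2 + Δi := by
    have e : μ {ω | D1 ω = 2}
        = μ (({ω | D0 ω = 2} ∪ {ω | D0 ω = 0 ∧ D1 ω = 2}) ∪ {ω | D0 ω = 1 ∧ D1 ω = 2}) := by
      apply aeEq
      intro ω hω
      simp only [Set.mem_setOf_eq, Set.mem_union]
      have := hD0b ω
      omega
    have hd1 : Disjoint {ω | D0 ω = 2} {ω | D0 ω = 0 ∧ D1 ω = 2} := by
      rw [Set.disjoint_left]; rintro ω h1 ⟨h2, _⟩; simp only [Set.mem_setOf_eq] at h1; omega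
    have hd2 : Disjoint ({ω | D0 ω = 2} ∪ {ω | D0 ω = 0 ∧ D1 ω = 2})
        {ω | D0 ω = 1 ∧ D1 ω = 2} := by
      rw [Set.disjoint_left]
      rintro ω h1 ⟨h2, _⟩
      simp only [Set.mem_union, Set.mem_setOf_eq] at h1
      omega
    rw [← hΔ2, ← hΔi]
    unfold pr
    rw [e, measure_union hd2 ((mD0 1).inter (mD1 2)),
      measure_union hd1 ((mD0 0).inter (mD1 2)),
      ENNReal.toReal_add (by finiteness) (measure_ne_top μ _),
      ENNReal.toReal_add (measure_ne_top μ _) (measure_ne_top μ _)]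
  -- the intensive-margin set
  have h4 : pr μ {ω | 0 < D0 ω ∧ D0 ω < D1 ω} = Δi := by
    rw [← hΔi]
    unfold pr
    congr 1
    apply aeEq
    intro ω hω
    simp only [Set.mem_setOf_eq]
    omega
  rw [show (0:ℕ) = 0 from rfl] at *
  constructor
  · rw [cP1 1, cP1 2, cP0 1, cP0 2]
    constructor
    · rintro ⟨hA, _⟩; rw [h1, h2] at hA; linarith
    · intro hle
      constructor
      · rw [h1, h2]; linarith
      · rw [h3]; linarith
  · intro hpos hle
    rw [cP1 1, cP1 2, cP0 1, cP0 2, h1, h2, h3, h4]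
    exact ⟨by linarith, by linarith, hpos⟩
end
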